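/- arXiv:0707.1975 — 11 statements merged into one kernel-verified Lean document; each statement's English description precedes it below -/
import Mathlib

section
/- Let p be a prime and G a finite abelian p-group isomorphic to Z_{p^{e_1}} ⊕ ... ⊕ Z_{p^{e_l}} with exponent p^{e_l}. Let A be a nonempty subset of {1,...,p^{e_l}} whose elements are pairwise incongruent modulo p and nonzero modulo p, with |A| = r. Then for any integer k ≥ (1 + Σ_{i=1}^l (p^{e_i} - 1))/r and any sequence g_1,...,g_k in G, there exist indices 1 ≤ i_1 < ... < i_m ≤ k with m ≥ 1 and coefficients a_1,...,a_m ∈ A such that Σ_{j=1}^m a_j · g_{i_j} = 0 in G. -/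
/-!
Work in the group algebra `𝔽_p[G]` with the ideal `J` generated by the elements `X^δᵢ - 1`, where
the `δᵢ` generate `G` and `p^eᵢ • δᵢ = 0`. In characteristic `p`,
`(X^δᵢ - 1)^(p^eᵢ) = X^(p^eᵢ • δᵢ) - 1 = 0`, so by pigeonhole `J^(1 + ∑ (p^eᵢ - 1)) = 0`.
Lagrange interpolation at the nodes `A ⊆ 𝔽_p` gives weights `w` with
`∑_{a ∈ A} w a (1 + Y)^a ≡ 1 mod Y^|A|`; hence `uⱼ = ∑_{a ∈ A} w a X^(a • gⱼ)` satisfies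
`uⱼ - 1 ∈ J^|A|`, and `∏ⱼ (uⱼ - 1) ∈ J^(k |A|) = 0`. Expanding the product, its coefficient at `0`
is `(-1)^k` unless some nonempty `s` has `∑_{j ∈ s} aⱼ • gⱼ = 0` with all `aⱼ ∈ A`.
-/

/-- A sequence `g` admits a nonempty subsequence with a zero linear combination
with coefficients drawn from `A` (with repetition allowed). -/
def hasZeroComb {G : Type*} [AddCommGroup G] (A : Finset ℕ) {k : ℕ} (g : Fin k → G) : Prop :=
  ∃ s : Finset (Fin k), s.Nonempty ∧ ∃ a : Fin k → ℕ,
    (∀ i ∈ s, a i ∈ A) ∧ ∑ i ∈ s, a i • g i = 0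

open Finset Polynomial

theorem Finset.exists_le_card_fiber_of_sum_sub_one_lt {α ι : Type*} [Fintype α] [Fintype ι]
    [DecidableEq ι] (f : α → ι) (c : ι → ℕ) (h : ∑ i, (c i - 1) < Fintype.card α) :
    ∃ i, c i ≤ #{a | f a = i} := by
  by_contra! hlt
  have : Fintype.card α ≤ ∑ i, (c i - 1) := calc
    Fintype.card α = ∑ i, #{a | f a = i} := card_eq_sum_card_fiberwise fun _ _ ↦ mem_univ _
    _ ≤ ∑ i, (c i - 1) := sum_le_sum fun i _ ↦ Nat.le_sub_one_of_lt (hlt i)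
  omega

theorem Ideal.span_range_pow_eq_bot_of_pow_eq_zero {R ι : Type*} [CommSemiring R] [Fintype ι]
    (x : ι → R) (c : ι → ℕ) (hx : ∀ i, x i ^ c i = 0) {n : ℕ} (hn : ∑ i, (c i - 1) < n) :
    span (Set.range x) ^ n = ⊥ := by
  classical
  rw [span, Submodule.span_pow, Submodule.span_eq_bot]
  intro y hy
  obtain ⟨f, rfl⟩ := Set.mem_pow.mp hy
  choose j hj using fun m ↦ (f m).2
  obtain ⟨i, hi⟩ := exists_le_card_fiber_of_sum_sub_one_lt j c (by simpa using hn)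
  have hfiber : ∏ m ∈ {m | j m = i}, (f m : R) = 0 := by
    rw [prod_congr rfl fun m hm ↦ by rw [← hj m, (mem_filter.mp hm).2], prod_const,
      ← Nat.add_sub_cancel' hi, pow_add, hx, zero_mul]
  rw [List.prod_ofFn, ← prod_filter_mul_prod_filter_not univ (fun m ↦ j m = i), hfiber, zero_mul]

theorem Lagrange.sum_eval_basis_mul_eval {F ι : Type*} [Field F] [DecidableEq ι] {s : Finset ι}
    {v : ι → F} (hvs : Set.InjOn v s) {f : F[X]} (hf : f.degree < #s) (x : F) :
    ∑ i ∈ s, (Lagrange.basis s v i).eval x * f.eval (v i) = f.eval x := by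
  conv_rhs => rw [eq_interpolate hvs hf, interpolate_apply, eval_finsetSum]
  simp only [eval_mul, eval_C, mul_comm]

theorem Polynomial.eval_natCast_C_inv_factorial_mul_descPochhammer {F : Type*} [Field F] {d : ℕ}
    (hd : (d.factorial : F) ≠ 0) (a : ℕ) :
    (C (d.factorial : F)⁻¹ * descPochhammer F d).eval (a : F) = a.choose d := by
  rw [eval_mul, eval_C, descPochhammer_eval_eq_descFactorial,
    Nat.descFactorial_eq_factorial_mul_choose, Nat.cast_mul, inv_mul_cancel_left₀ hd]

theorem exists_X_pow_card_dvd_sum_C_mul_X_add_one_pow_sub_one {p : ℕ} [Fact p.Prime]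
    {A : Finset ℕ} (hA : Set.InjOn (Nat.cast : ℕ → ZMod p) A) :
    ∃ w : ℕ → ZMod p, X ^ #A ∣ ∑ a ∈ A, C (w a) * (X + 1) ^ a - 1 := by
  classical
  -- For `d < #A ≤ p`, `a ↦ (a.choose d : ZMod p)` is a polynomial function of degree `d`, so the
  -- Lagrange weights at `0` turn `∑ a ∈ A, w a * a.choose d` into its value at `0`.
  refine ⟨fun a ↦ (Lagrange.basis A (↑) a).eval 0, X_pow_dvd_iff.mpr fun d hd ↦ ?_⟩
  have hdp : d < p := by
    have := card_le_card_of_injOn _ (fun a _ ↦ mem_univ _) hA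
    rw [card_univ, ZMod.card] at this
    omega
  have hfact : (d.factorial : ZMod p) ≠ 0 := by
    rw [Ne, ZMod.natCast_eq_zero_iff, Nat.Prime.dvd_factorial Fact.out]
    omega
  have hdeg : (C (d.factorial : ZMod p)⁻¹ * descPochhammer (ZMod p) d).degree < #A :=
    degree_le_natDegree.trans_lt <| by
      exact_mod_cast natDegree_C_mul_le _ _ |>.trans_lt (by simpa using hd)
  have hinterp := Lagrange.sum_eval_basis_mul_eval hA hdeg 0
  simp only [eval_natCast_C_inv_factorial_mul_descPochhammer hfact] at hinterp
  rcases eq_or_ne d 0 with rfl | h0 <;> simp_all [coeff_X_add_one_pow, coeff_one]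

theorem Polynomial.aeval_mem_pow_of_X_pow_dvd {R S : Type*} [CommSemiring R] [CommSemiring S]
    [Algebra R S] {I : Ideal S} {y : S} (hy : y ∈ I) {f : R[X]} {n : ℕ} (hf : X ^ n ∣ f) :
    aeval y f ∈ I ^ n := by
  obtain ⟨q, rfl⟩ := hf
  rw [map_mul, map_pow, aeval_X]
  exact Ideal.mul_mem_right _ _ (Ideal.pow_mem_pow hy n)

open scoped Pointwise

namespace AddMonoidAlgebra

variable {k G : Type*}

instance charP [CommSemiring k] [AddMonoid G] (p : ℕ) [CharP k p] : CharP k[G] p :=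
  charP_of_injective_algebraMap single_right_injective p

theorem support_coeff_prod_subset [CommSemiring k] [AddCommMonoid G] [DecidableEq G] {ι : Type*}
    (s : Finset ι) (x : ι → k[G]) :
    ((∏ j ∈ s, x j).coeff.support : Set G) ⊆ ∑ j ∈ s, ((x j).coeff.support : Set G) := by
  classical
  induction s using Finset.induction_on with
  | empty => simpa using coe_subset.mpr (support_coeff_one_subset (k := k) (G := G))
  | insert i s hi ih =>
    rw [prod_insert hi, sum_insert hi]
    exact (coe_subset.mpr (support_coeff_mul_subset _ _)).trans
      (by rw [Finset.coe_add]; exact Set.add_subset_add_left ih)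

theorem coeff_prod_sub_one_zero [CommRing k] [AddCommMonoid G] {ι : Type*} (t : Finset ι)
    (x : ι → k[G]) (h : ∀ s ⊆ t, s.Nonempty → (∏ j ∈ s, x j).coeff 0 = 0) :
    (∏ j ∈ t, (x j - 1)).coeff 0 = (-1) ^ #t := by
  classical
  have hneg : ∀ n : ℕ, (-1 : k[G]) ^ n = single 0 ((-1) ^ n) := fun n ↦ by
    rw [one_def, ← single_neg, single_pow, smul_zero]
  simp_rw [sub_eq_add_neg, prod_add, prod_const, hneg, coeff_sum, Finsupp.finsetSum_apply,
    coeff_mul_single_zero]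
  rw [sum_eq_single ∅ (fun s hs hne ↦ by
    rw [h s (mem_powerset.mp hs) (nonempty_iff_ne_empty.mpr hne), zero_mul]) (by simp)]
  simp [one_def]

theorem single_sub_one_mem_span [CommRing k] [AddCommGroup G] {ι : Type*} (δ : ι → G)
    (hδ : AddSubgroup.closure (Set.range δ) = ⊤) (g : G) :
    single g (1 : k) - 1 ∈ Ideal.span (Set.range fun i ↦ single (δ i) (1 : k) - 1) := by
  set I := Ideal.span (Set.range fun i ↦ single (δ i) (1 : k) - 1)
  rw [← Ideal.Quotient.eq, map_one]
  have hmem : g ∈ AddSubgroup.closure (Set.range δ) := hδ ▸ AddSubgroup.mem_top g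
  induction hmem using AddSubgroup.closure_induction with
  | mem _ h =>
    obtain ⟨i, rfl⟩ := h
    rw [← map_one (Ideal.Quotient.mk I), Ideal.Quotient.eq]
    exact Ideal.subset_span ⟨i, rfl⟩
  | zero => rw [← one_def, map_one]
  | add a b _ _ ha hb => rw [← one_mul (1 : k), ← single_mul_single, map_mul, ha, hb, mul_one]
  | neg a _ ha =>
    calc Ideal.Quotient.mk I (single (-a) 1)
        = Ideal.Quotient.mk I (single (-a) 1) * Ideal.Quotient.mk I (single a 1) := by
          rw [ha, mul_one]
      _ = 1 := by rw [← map_mul, single_mul_single, neg_add_cancel, mul_one, ← one_def, map_one]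

theorem single_sub_one_pow_eq_zero [CommRing k] [AddCommMonoid G] {p : ℕ} [Fact p.Prime]
    [CharP k p] {g : G} {n : ℕ} (hg : p ^ n • g = 0) : (single g (1 : k) - 1) ^ p ^ n = 0 := by
  rw [sub_pow_expChar_pow, single_pow, hg, one_pow, one_pow, ← one_def, sub_self]

theorem aeval_single_sub_one [CommRing k] [AddCommMonoid G] (g : G) (A : Finset ℕ) (w : ℕ → k) :
    aeval (single g 1 - 1 : k[G]) (∑ a ∈ A, C (w a) * (X + 1) ^ a) =
      ∑ a ∈ A, single (a • g) (w a) := by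
  simp [coe_algebraMap, single_pow, single_mul_single]

theorem support_coeff_sum_single_subset [Semiring k] [AddMonoid G] {α : Type*} (s : Finset α)
    (f : α → G) (w : α → k) :
    ((∑ a ∈ s, single (f a) (w a)).coeff.support : Set G) ⊆ f '' s := fun x hx ↦ by
  classical
  rw [mem_coe, coeff_sum] at hx
  obtain ⟨a, ha, hx⟩ := mem_biUnion.mp (Finsupp.support_finsetSum hx)
  exact ⟨a, ha, (mem_singleton.mp (Finsupp.support_single_subset hx)).symm⟩

end AddMonoidAlgebra

theorem hasZeroComb_of_zero_mem_sum {G : Type*} [AddCommGroup G] {A : Finset ℕ} {k : ℕ}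
    {g : Fin k → G} {s : Finset (Fin k)} (hs : s.Nonempty)
    (h0 : (0 : G) ∈ ∑ j ∈ s, (fun a : ℕ ↦ a • g j) '' A) : hasZeroComb A g := by
  obtain ⟨x, hx, hsum⟩ := (Set.mem_finsetSum _ _ _).mp h0
  choose! a haA hax using fun j (hj : j ∈ s) ↦ hx hj
  exact ⟨s, hs, a, haA, by rw [sum_congr rfl hax, hsum]⟩

open AddMonoidAlgebra in
theorem hasZeroComb_of_closure_eq_top {p : ℕ} [Fact p.Prime] {G ι : Type*} [AddCommGroup G]
    [Fintype ι] (δ : ι → G) (hδ : AddSubgroup.closure (Set.range δ) = ⊤) (c : ι → ℕ)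
    (hc : ∀ i, p ^ c i • δ i = 0) {A : Finset ℕ} (hA : Set.InjOn (Nat.cast : ℕ → ZMod p) A)
    {k : ℕ} (hk : 1 + ∑ i, (p ^ c i - 1) ≤ k * #A) (g : Fin k → G) : hasZeroComb A g := by
  classical
  by_contra hg
  obtain ⟨w, hw⟩ := exists_X_pow_card_dvd_sum_C_mul_X_add_one_pow_sub_one hA
  let J : Ideal (ZMod p)[G] := Ideal.span (Set.range fun i ↦ single (δ i) 1 - 1)
  have hJ : J ^ (k * #A) = ⊥ :=
    Ideal.span_range_pow_eq_bot_of_pow_eq_zero _ _ (fun i ↦ single_sub_one_pow_eq_zero (hc i))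
      (by omega)
  let u : Fin k → (ZMod p)[G] := fun j ↦ ∑ a ∈ A, single (a • g j) (w a)
  have hu : ∀ j, u j - 1 ∈ J ^ #A := fun j ↦ by
    have := aeval_mem_pow_of_X_pow_dvd (single_sub_one_mem_span (k := ZMod p) δ hδ (g j)) hw
    rwa [map_sub, map_one, aeval_single_sub_one] at this
  have hprod : ∏ j, (u j - 1) = 0 := by
    simpa [← pow_mul, mul_comm, hJ] using Ideal.prod_mem_prod fun j (_ : j ∈ univ) ↦ hu j
  have hcoeff : (∏ j, (u j - 1)).coeff 0 = (-1) ^ k := by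
    simpa using coeff_prod_sub_one_zero univ u fun s _ hs ↦ by
      by_contra h0
      have h0mem : (0 : G) ∈ ((∏ j ∈ s, u j).coeff.support : Set G) :=
        Finsupp.mem_support_iff.mpr h0
      exact hg <| hasZeroComb_of_zero_mem_sum hs <| Set.finsetSum_subset_finsetSum _ _ _
        (fun j _ ↦ support_coeff_sum_single_subset A _ w) (support_coeff_prod_subset s u h0mem)
  rw [hprod] at hcoeff
  exact pow_ne_zero k (neg_ne_zero.mpr one_ne_zero) hcoeff.symm

theorem ZMod.closure_range_piSingle_one {ι : Type*} [Fintype ι] [DecidableEq ι] (n : ι → ℕ) :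
    AddSubgroup.closure (Set.range fun i ↦ (Pi.single i 1 : ∀ i, ZMod (n i))) = ⊤ := by
  refine eq_top_iff.mpr fun x _ ↦ ?_
  rw [← univ_sum_single x]
  refine AddSubgroup.sum_mem _ fun i _ ↦ ?_
  rw [← ZMod.intCast_zmod_cast (x i), ← zsmul_one, Pi.single_smul]
  exact AddSubgroup.zsmul_mem _ (AddSubgroup.subset_closure (Set.mem_range_self i)) _

theorem stmt0 {p l : ℕ} (hp : p.Prime) (e : Fin l → ℕ)
    {G : Type*} [AddCommGroup G] (φ : G ≃+ ∀ i : Fin l, ZMod (p ^ e i))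
    (A : Finset ℕ)
    (hAdist : ∀ a ∈ A, ∀ b ∈ A, a ≡ b [MOD p] → a = b)
    (k : ℕ) (hk : 1 + ∑ i, (p ^ e i - 1) ≤ k * A.card)
    (g : Fin k → G) : hasZeroComb A g := by
  have : Fact p.Prime := ⟨hp⟩
  refine hasZeroComb_of_closure_eq_top (fun i ↦ φ.symm (Pi.single i 1)) ?_ e (fun i ↦ ?_)
    (fun a ha b hb hab ↦ hAdist a ha b hb ((ZMod.natCast_eq_natCast_iff a b p).mp hab)) hk g
  · have := AddMonoidHom.map_closure φ.symm.toAddMonoidHom (Set.range fun i ↦ Pi.single i 1)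
    rwa [ZMod.closure_range_piSingle_one, AddSubgroup.map_top_of_surjective _ φ.symm.surjective,
      ← Set.range_comp, eq_comm] at this
  · rw [← map_nsmul, ← Pi.single_smul, nsmul_one, ZMod.natCast_self, Pi.single_zero, map_zero]
end

section
/- Let p be a prime and r ≥ 1 an integer. Let B = {0, b_1, ..., b_r} be a subset of {0,1,...,p-1} with the b_i pairwise incongruent modulo p and nonzero. Then there exists a polynomial f(x) = c_0 + c_{b_1} x^{b_1} + ... + c_{b_r} x^{b_r} over F_p such that (1-x)^r divides f(x) and f(0) = c_0 ≠ 0. -/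
open Polynomial Finset

theorem stmt1 {p r : ℕ} (hp : p.Prime) (hr : 1 ≤ r) (b : Fin r → ℕ)
    (hb1 : ∀ i, b i ∈ Finset.Icc 1 (p - 1))
    (hb2 : ∀ i j, b i ≡ b j [MOD p] → i = j) :
    ∃ f : Polynomial (ZMod p),
      f.support ⊆ insert 0 (Finset.image b Finset.univ) ∧
      (1 - Polynomial.X) ^ r ∣ f ∧ f.coeff 0 ≠ 0 := by
  haveI := Fact.mk hp
  set v : Fin r → ZMod p := fun i => (b i : ZMod p) with hv_def
  have hvinj : Function.Injective v := by
    intro i j h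
    exact hb2 i j ((ZMod.natCast_eq_natCast_iff _ _ _).mp h)
  have hv : Set.InjOn v (Finset.univ : Finset (Fin r)) := fun i _ j _ h => hvinj h
  have hrp : r ≤ p := by
    have := Fintype.card_le_of_injective v hvinj
    simpa [ZMod.card] using this
  set c : Fin r → ZMod p := fun i => (Lagrange.basis Finset.univ v i).eval 0 with hc_def
  have key : ∀ P : Polynomial (ZMod p), P.degree < (r : ℕ) →
      ∑ i : Fin r, c i * P.eval (v i) = P.eval 0 := by
    intro P hP
    have hcard : P.degree < ((Finset.univ : Finset (Fin r)).card : ℕ) := by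
      simpa using hP
    conv_rhs => rw [Lagrange.eq_interpolate hv hcard]
    rw [Lagrange.interpolate_apply, eval_finset_sum]
    exact Finset.sum_congr rfl fun i _ => by rw [eval_mul, eval_C]; ring
  set f : Polynomial (ZMod p) := C 1 - ∑ i : Fin r, C (c i) * X ^ (b i) with hf
  have hcoeff : ∀ n, f.coeff n =
      (if n = 0 then 1 else 0) - ∑ i : Fin r, (if b i = n then c i else 0) := by
    intro n
    rw [hf, coeff_sub, finset_sum_coeff, coeff_C]
    congr 1
    exact Finset.sum_congr rfl fun i _ => by
      rw [coeff_C_mul, coeff_X_pow]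
      by_cases h : b i = n
      · simp [h]
      · rw [if_neg (fun hh => h hh.symm), if_neg h, mul_zero]
  have hc0 : f.coeff 0 = 1 := by
    rw [hcoeff]
    have hz : ∀ i : Fin r, (if b i = 0 then c i else 0) = 0 := by
      intro i
      have h1 := (Finset.mem_Icc.mp (hb1 i)).1
      rw [if_neg (by omega)]
    simp [hz]
  have hbin : ∀ d : ℕ, d < r →
      ∑ i : Fin r, c i * ((b i).choose d : ZMod p) = if d = 0 then 1 else 0 := by
    intro d hd
    have hfac : (d.factorial : ZMod p) ≠ 0 := by
      rw [Ne, ZMod.natCast_eq_zero_iff]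
      intro h
      have := (Nat.Prime.dvd_factorial hp).mp h
      omega
    have hne : (descPochhammer (ZMod p) d) ≠ 0 := (monic_descPochhammer (ZMod p) d).ne_zero
    have hdeg : (descPochhammer (ZMod p) d).degree < (r : ℕ) := by
      rw [degree_eq_natDegree hne, descPochhammer_natDegree]
      exact_mod_cast hd
    apply mul_left_cancel₀ hfac
    calc (d.factorial : ZMod p) * ∑ i : Fin r, c i * ((b i).choose d : ZMod p)
        = ∑ i : Fin r, c i * (descPochhammer (ZMod p) d).eval (v i) := by
          rw [Finset.mul_sum]
          refine Finset.sum_congr rfl fun i _ => ?_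
          simp only [hv_def]
          rw [descPochhammer_eval_eq_descFactorial,
            Nat.descFactorial_eq_factorial_mul_choose, Nat.cast_mul]
          ring
      _ = (descPochhammer (ZMod p) d).eval 0 := key _ hdeg
      _ = (d.factorial : ZMod p) * (if d = 0 then 1 else 0) := by
          rw [descPochhammer_eval_zero]
          by_cases h : d = 0 <;> simp [h]
  -- low coefficients of f.comp (X+1) vanish
  have hX : (X : (ZMod p)[X]) ^ r ∣ f.comp (X + 1) := by
    rw [X_pow_dvd_iff]
    intro d hd
    have hcomp : f.comp (X + 1) = C 1 - ∑ i : Fin r, C (c i) * (X + 1) ^ (b i) := by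
      rw [hf, sub_comp, C_comp, Polynomial.sum_comp]
      congr 1
      exact Finset.sum_congr rfl fun i _ => by rw [mul_comp, C_comp, pow_comp, X_comp]
    rw [hcomp, coeff_sub, coeff_C, finset_sum_coeff]
    have : ∀ i : Fin r, (C (c i) * (X + 1) ^ (b i)).coeff d = c i * ((b i).choose d : ZMod p) := by
      intro i
      rw [coeff_C_mul, coeff_X_add_one_pow]
    rw [Finset.sum_congr rfl fun i _ => this i, hbin d hd, sub_eq_zero]
  obtain ⟨q, hq⟩ := hX
  have hXsub : ((X : (ZMod p)[X]) - 1) ^ r ∣ f := by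
    refine ⟨q.comp (X - 1), ?_⟩
    have h2 := congrArg (fun g : (ZMod p)[X] => g.comp (X - 1)) hq
    simp only [mul_comp, pow_comp, X_comp] at h2
    have h3 : ((X : (ZMod p)[X]) + 1).comp (X - 1) = X := by
      rw [add_comp, X_comp, one_comp]; ring
    rwa [comp_assoc, h3, comp_X] at h2
  refine ⟨f, ?_, ?_, ?_⟩
  · intro n hn
    rw [mem_support_iff, hcoeff] at hn
    simp only [Finset.mem_insert, Finset.mem_image, Finset.mem_univ, true_and]
    by_contra h
    push_neg at h
    apply hn
    have hz : ∀ i : Fin r, (if b i = n then c i else 0) = 0 := fun i => by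
      simp [h.2 i]
    simp [h.1, hz]
  · refine dvd_trans ?_ hXsub
    rw [show ((X : (ZMod p)[X]) - 1) = -(1 - X) by ring, neg_pow]
    exact dvd_mul_left _ _
  · rw [hc0]; exact one_ne_zero
end

section
/- Let p be a prime, G a finite abelian p-group isomorphic to Z_{p^{e_1}} ⊕ ... ⊕ Z_{p^{e_l}}, and g_1, ..., g_s a sequence in G (written multiplicatively) with s ≥ 1 + Σ_{i=1}^l (p^{e_i} - 1). Then the product ∏_{i=1}^s (1 - g_i) equals 0 in the group algebra F_p[G]. -/
/-!
Let `x₁, …, x_l` be the standard generators of `G` and `I` the ideal of `𝔽_p[G]` generated by the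
elements `1 - xⱼ`. Since `1 - ab = (1 - a) + a (1 - b)`, every `1 - g` lies in `I`, so the product
lies in `I ^ s`. In characteristic `p`, `(1 - xⱼ) ^ p ^ eⱼ = 1 - xⱼ ^ p ^ eⱼ = 0`, and an ideal that
is a sum of ideals `Iⱼ` with `Iⱼ ^ nⱼ = 0` satisfies `I ^ (1 + ∑ (nⱼ - 1)) = 0`, because each term
of the multinomial expansion contains some `Iⱼ` to a power at least `nⱼ`.
-/

open Finset

namespace Ideal

variable {R : Type*} [CommSemiring R]

theorem sup_pow_eq_bot_of_pow_eq_bot {I J : Ideal R} {a b n : ℕ} (hI : I ^ a = ⊥)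
    (hJ : J ^ b = ⊥) (h : a + b ≤ n + 1) : (I ⊔ J) ^ n = ⊥ := by
  rw [← add_eq_sup, add_pow, sum_eq_sup, eq_bot_iff]
  refine Finset.sup_le fun i _ => ?_
  rcases le_or_gt a i with hai | hia
  · exact mul_le_left.trans <| mul_le_left.trans <| (pow_le_pow_right hai).trans hI.le
  · have : b ≤ n - i := by lia
    exact mul_le_left.trans <| mul_le_right.trans <| (pow_le_pow_right this).trans hJ.le

theorem finset_sup_pow_eq_bot {ι : Type*} (s : Finset ι) (I : ι → Ideal R) (n : ι → ℕ)
    (h : ∀ i ∈ s, I i ^ n i = ⊥) : s.sup I ^ (1 + ∑ i ∈ s, (n i - 1)) = ⊥ := by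
  classical
  induction s using Finset.induction_on with
  | empty => simp
  | insert a s ha ih =>
    rw [sup_insert, sum_insert ha]
    refine sup_pow_eq_bot_of_pow_eq_bot (h a (mem_insert_self a s))
      (ih fun i hi => h i (mem_insert_of_mem hi)) ?_
    lia

end Ideal

theorem Ideal.one_sub_mem_of_mem_closure {M R : Type*} [Monoid M] [Ring R] (f : M →* R)
    (I : Ideal R) {S : Set M} (hS : ∀ s ∈ S, 1 - f s ∈ I) {m : M}
    (hm : m ∈ Submonoid.closure S) : 1 - f m ∈ I := by
  induction hm using Submonoid.closure_induction with
  | mem s hs => exact hS s hs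
  | one => simp
  | mul a b _ _ ha hb =>
    have : 1 - f (a * b) = (1 - f a) + f a * (1 - f b) := by rw [map_mul]; noncomm_ring
    rw [this]
    exact add_mem ha (mul_mem_left I _ hb)

namespace ZMod

variable {ι : Type*} [DecidableEq ι] (n : ι → ℕ)

def piGen (i : ι) : ∀ j, Multiplicative (ZMod (n j)) :=
  Pi.mulSingle (M := fun j => Multiplicative (ZMod (n j))) i (.ofAdd 1)

theorem piGen_pow_self (i : ι) : piGen n i ^ n i = 1 := by
  rw [piGen, ← Pi.mulSingle_pow, ← ofAdd_nsmul, nsmul_one, natCast_self, ofAdd_zero,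
    Pi.mulSingle_one]

theorem mem_closure_range_piGen [Fintype ι] [∀ i, NeZero (n i)]
    (a : ∀ i, Multiplicative (ZMod (n i))) : a ∈ Submonoid.closure (Set.range (piGen n)) := by
  have ha : a = ∏ i, piGen n i ^ (a i).toAdd.val := by
    conv_lhs => rw [← Finset.univ_prod_mulSingle a]
    refine Finset.prod_congr rfl fun i _ => ?_
    rw [piGen, ← Pi.mulSingle_pow, ← ofAdd_nsmul, nsmul_one, natCast_zmod_val, ofAdd_toAdd]
  rw [ha]
  exact Submonoid.prod_mem _ fun i _ => pow_mem (Submonoid.subset_closure (Set.mem_range_self i)) _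

end ZMod

theorem one_sub_pow_char_pow_eq_zero {R : Type*} [CommRing R] {p : ℕ} [Fact p.Prime]
    [CharP R p] {u : R} {k : ℕ} (hu : u ^ p ^ k = 1) : (1 - u) ^ p ^ k = 0 := by
  rw [sub_pow_char_pow, one_pow, hu, sub_self]

theorem stmt2_general {p l : ℕ} (hp : p.Prime) (e : Fin l → ℕ)
    {G : Type*} [CommGroup G]
    (φ : G ≃* ∀ i : Fin l, Multiplicative (ZMod (p ^ e i)))
    {s : ℕ} (hs : 1 + ∑ i, (p ^ e i - 1) ≤ s) (g : Fin s → G) :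
    ∏ i, (1 - MonoidAlgebra.of (ZMod p) G (g i)) = 0 := by
  have : Fact p.Prime := ⟨hp⟩
  have : ∀ i, NeZero (p ^ e i) := fun i => ⟨pow_ne_zero _ hp.ne_zero⟩
  have : CharP (MonoidAlgebra (ZMod p) G) p := charP_of_injective_algebraMap' (ZMod p) p
  set f := (MonoidAlgebra.of (ZMod p) G).comp φ.symm.toMonoidHom
  set J := fun i => Ideal.span {1 - f (ZMod.piGen _ i)}
  have hJ : ∀ i ∈ univ, J i ^ p ^ e i = ⊥ := fun i _ => by
    rw [Ideal.span_singleton_pow, Ideal.span_singleton_eq_bot]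
    exact one_sub_pow_char_pow_eq_zero (by rw [← map_pow, ZMod.piGen_pow_self, map_one])
  have hmem : ∀ i, 1 - MonoidAlgebra.of (ZMod p) G (g i) ∈ univ.sup J := fun i => by
    simpa [f] using Ideal.one_sub_mem_of_mem_closure f (univ.sup J)
      (by rintro _ ⟨j, rfl⟩; exact le_sup (f := J) (mem_univ j) (Ideal.mem_span_singleton_self _))
      (ZMod.mem_closure_range_piGen _ (φ (g i)))
  have hprod : ∏ i, (1 - MonoidAlgebra.of (ZMod p) G (g i)) ∈ univ.sup J ^ s := by
    simpa using Ideal.prod_mem_prod (s := univ) (I := fun _ => univ.sup J) fun i _ => hmem i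
  rw [← Ideal.mem_bot, ← Ideal.finset_sup_pow_eq_bot univ J _ hJ]
  exact Ideal.pow_le_pow_right hs hprod

theorem stmt2 {p l : ℕ} (hp : p.Prime) (hl : 0 < l) (e : Fin l → ℕ)
    (he : ∀ i, 1 ≤ e i)
    {G : Type*} [CommGroup G]
    (φ : G ≃* ∀ i : Fin l, Multiplicative (ZMod (p ^ e i)))
    {s : ℕ} (hs : 1 + ∑ i, (p ^ e i - 1) ≤ s) (g : Fin s → G) :
    ∏ i, (1 - MonoidAlgebra.of (ZMod p) G (g i)) = 0 :=
  stmt2_general hp e φ hs g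
end

section
/- Let p be a prime, d ≥ 1 an integer, and A a nonempty subset of {1,...,p-1}. Then for any integer k ≥ (d(p-1)+1)/|A| and any sequence g_1,...,g_k in (Z/pZ)^d, there is a nonempty subsequence g_{i_1},...,g_{i_m} and coefficients a_1,...,a_m ∈ A with Σ_j a_j g_{i_j} = 0. -/
open Finset Polynomial in
/-- Key univariate fact: for `j < |S| - 1`, the weighted power sums with nodal weights vanish. -/
lemma sum_pow_mul_nodalWeight {F : Type*} [Field F] [DecidableEq F]
    (S : Finset F) (j : ℕ) (hj : j + 1 < S.card) :
    ∑ s ∈ S, s ^ j * Lagrange.nodalWeight S id s = 0 := by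
  have hinj : Set.InjOn (id : F → F) S := Function.injective_id.injOn
  have hX : (X ^ j : F[X]) = Lagrange.interpolate S id (fun t => t ^ j) := by
    have hdeg : (X ^ j : F[X]).degree < S.card := by
      rw [degree_X_pow]
      exact_mod_cast Nat.lt_of_succ_lt hj
    have hev : ∀ i ∈ S, (X ^ j : F[X]).eval (id i) = i ^ j := by
      intro i hi; simp
    exact Lagrange.eq_interpolate_of_eval_eq (fun t => t ^ j) hinj hdeg hev
  have hcoeff := congrArg (fun q => Polynomial.coeff q (S.card - 1)) hX
  simp only [coeff_X_pow] at hcoeff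
  rw [if_neg (by omega), Lagrange.interpolate_apply, finset_sum_coeff] at hcoeff
  have hb : ∀ i ∈ S, (Polynomial.C (i ^ j) * Lagrange.basis S id i).coeff (S.card - 1)
      = i ^ j * Lagrange.nodalWeight S id i := by
    intro i hi
    rw [coeff_C_mul, Lagrange.basis_eq_prod_sub_inv_mul_nodal_div hi,
      ← Lagrange.nodal_erase_eq_nodal_div hi, coeff_C_mul]
    have hdeg : (Lagrange.nodal (S.erase i) id).natDegree = S.card - 1 := by
      rw [Lagrange.natDegree_nodal, card_erase_of_mem hi]
    rw [← hdeg, (Lagrange.nodal_monic).coeff_natDegree, mul_one]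
  rw [Finset.sum_congr rfl hb] at hcoeff
  exact hcoeff.symm

open Finset in
/-- Multivariate weighted vanishing: if the total degree of `P` is less than `k * (|S| - 1)`,
the weighted sum of `P` over `S^k` with nodal weights vanishes. -/
lemma sum_eval_mul_weight {F : Type*} [Field F] [DecidableEq F] {k : ℕ}
    (S : Finset F) (w : F → F) (hw : ∀ j, j + 1 < S.card → ∑ s ∈ S, s ^ j * w s = 0)
    (P : MvPolynomial (Fin k) F) (hP : P.totalDegree < k * (S.card - 1)) :
    ∑ x ∈ Fintype.piFinset (fun _ : Fin k => S),
      (MvPolynomial.eval x P) * ∏ i, w (x i) = 0 := by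
  have hrw : ∀ x : Fin k → F, (MvPolynomial.eval x P) * ∏ i, w (x i)
      = ∑ μ ∈ P.support, P.coeff μ * ∏ i, (x i ^ μ i * w (x i)) := by
    intro x
    rw [MvPolynomial.eval_eq', Finset.sum_mul]
    refine Finset.sum_congr rfl fun μ _ => ?_
    rw [mul_assoc, ← Finset.prod_mul_distrib]
  simp_rw [hrw]
  rw [Finset.sum_comm]
  refine Finset.sum_eq_zero fun μ hμ => ?_
  rw [← Finset.mul_sum, Finset.sum_prod_piFinset S (fun i v => v ^ μ i * w v)]
  have hsum : ∑ i : Fin k, μ i ≤ P.totalDegree := by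
    refine le_trans (le_of_eq ?_) (MvPolynomial.le_totalDegree hμ)
    rw [Finsupp.sum_fintype]
    intro i; rfl
  have hex : ∃ i : Fin k, μ i + 1 < S.card := by
    by_contra h
    push_neg at h
    have : k * (S.card - 1) ≤ ∑ i : Fin k, μ i := by
      calc k * (S.card - 1) = ∑ _i : Fin k, (S.card - 1) := by
              simp [Finset.sum_const, mul_comm]
        _ ≤ ∑ i : Fin k, μ i := Finset.sum_le_sum fun i _ => by
              have := h i; omega
    omega
  obtain ⟨i, hi⟩ := hex
  rw [Finset.prod_eq_zero (Finset.mem_univ i) (hw (μ i) hi), mul_zero]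

theorem stmt3 {p d : ℕ} (hp : p.Prime) (hd : 1 ≤ d)
    (A : Finset ℕ) (hA : A.Nonempty) (hAsub : A ⊆ Finset.Icc 1 (p - 1))
    (k : ℕ) (hk : d * (p - 1) + 1 ≤ k * A.card)
    (g : Fin k → (Fin d → ZMod p)) : hasZeroComb A g := by
  classical
  haveI : Fact p.Prime := ⟨hp⟩
  have hp2 : 2 ≤ p := hp.two_le
  -- bounds for elements of A
  have hAlt : ∀ a ∈ A, 1 ≤ a ∧ a < p := by
    intro a ha
    have := Finset.mem_Icc.mp (hAsub ha)
    omega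
  -- the image of A in ZMod p
  set A' : Finset (ZMod p) := A.image (Nat.cast) with hA'def
  have hcard' : A'.card = A.card := by
    apply Finset.card_image_of_injOn
    intro a ha b hb hab
    have ha' := hAlt a ha; have hb' := hAlt b hb
    have := congrArg ZMod.val hab
    rwa [ZMod.val_cast_of_lt ha'.2, ZMod.val_cast_of_lt hb'.2] at this
  have h0A' : (0 : ZMod p) ∉ A' := by
    intro h0
    obtain ⟨a, ha, hcast⟩ := Finset.mem_image.mp h0
    have ha' := hAlt a ha
    have := congrArg ZMod.val hcast
    rw [ZMod.val_cast_of_lt ha'.2, ZMod.val_zero] at this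
    omega
  set A₀ : Finset (ZMod p) := insert 0 A' with hA₀def
  have hcard₀ : A₀.card = A.card + 1 := by
    rw [hA₀def, Finset.card_insert_of_notMem h0A', hcard']
  -- the weight function
  set w : ZMod p → ZMod p := Lagrange.nodalWeight A₀ id with hwdef
  have hw0 : w 0 ≠ 0 :=
    Lagrange.nodalWeight_ne_zero Function.injective_id.injOn (Finset.mem_insert_self 0 A')
  -- the polynomial
  set L : Fin d → MvPolynomial (Fin k) (ZMod p) :=
    fun l => ∑ i : Fin k, MvPolynomial.C (g i l) * MvPolynomial.X i with hLdef
  set P : MvPolynomial (Fin k) (ZMod p) := ∏ l : Fin d, (1 - (L l) ^ (p - 1)) with hPdef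
  -- total degree bound
  have hLdeg : ∀ l, (L l).totalDegree ≤ 1 := by
    intro l
    refine MvPolynomial.totalDegree_finsetSum_le fun i _ => ?_
    calc (MvPolynomial.C (g i l) * MvPolynomial.X i).totalDegree
        ≤ (MvPolynomial.C (g i l) : MvPolynomial (Fin k) (ZMod p)).totalDegree
          + (MvPolynomial.X i : MvPolynomial (Fin k) (ZMod p)).totalDegree :=
          MvPolynomial.totalDegree_mul _ _
      _ ≤ 1 := by
          rw [MvPolynomial.totalDegree_C]
          simpa using MvPolynomial.totalDegree_X_le (R := ZMod p) i
  have hPdeg : P.totalDegree ≤ d * (p - 1) := by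
    calc P.totalDegree ≤ ∑ l : Fin d, (1 - (L l) ^ (p - 1)).totalDegree :=
          MvPolynomial.totalDegree_finset_prod _ _
      _ ≤ ∑ _l : Fin d, (p - 1) := by
          refine Finset.sum_le_sum fun l _ => ?_
          have h1 : (1 - (L l) ^ (p - 1)) = 1 + (-(L l ^ (p - 1))) := by ring
          rw [h1]
          refine le_trans (MvPolynomial.totalDegree_add _ _) ?_
          rw [MvPolynomial.totalDegree_one, MvPolynomial.totalDegree_neg]
          refine max_le (Nat.zero_le _) ?_
          calc (L l ^ (p - 1)).totalDegree ≤ (p - 1) * (L l).totalDegree :=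
                MvPolynomial.totalDegree_pow _ _
            _ ≤ (p - 1) * 1 := Nat.mul_le_mul_left _ (hLdeg l)
            _ = p - 1 := by ring
      _ = d * (p - 1) := by simp [Finset.sum_const, mul_comm]
  have hPdeg' : P.totalDegree < k * (A₀.card - 1) := by
    rw [hcard₀]
    simp only [Nat.add_sub_cancel]
    omega
  -- evaluation of P
  have hevalP : ∀ x : Fin k → ZMod p,
      MvPolynomial.eval x P = ∏ l : Fin d, (1 - (∑ i : Fin k, g i l * x i) ^ (p - 1)) := by
    intro x
    rw [hPdef]
    rw [map_prod]
    refine Finset.prod_congr rfl fun l _ => ?_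
    rw [map_sub, map_one, map_pow, hLdef]
    simp [MvPolynomial.eval_sum]
  -- the solution set
  set T : Finset (Fin k → ZMod p) :=
    (Fintype.piFinset (fun _ : Fin k => A₀)).filter
      (fun x => ∀ l : Fin d, ∑ i : Fin k, g i l * x i = 0) with hTdef
  -- the weighted sum over the box equals the weighted sum over T
  have hsplit : ∑ x ∈ Fintype.piFinset (fun _ : Fin k => A₀),
      (MvPolynomial.eval x P) * ∏ i, w (x i) = ∑ x ∈ T, ∏ i, w (x i) := by
    rw [hTdef, Finset.sum_filter]
    refine Finset.sum_congr rfl fun x _ => ?_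
    by_cases hx : ∀ l : Fin d, ∑ i : Fin k, g i l * x i = 0
    · rw [if_pos hx, hevalP]
      have : ∏ l : Fin d, (1 - (∑ i : Fin k, g i l * x i) ^ (p - 1)) = 1 := by
        refine Finset.prod_eq_one fun l _ => ?_
        rw [hx l, zero_pow (by omega), sub_zero]
      rw [this, one_mul]
    · rw [if_neg hx]
      push_neg at hx
      obtain ⟨l, hl⟩ := hx
      rw [hevalP]
      have : ∏ l : Fin d, (1 - (∑ i : Fin k, g i l * x i) ^ (p - 1)) = 0 := by
        refine Finset.prod_eq_zero (Finset.mem_univ l) ?_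
        rw [ZMod.pow_card_sub_one_eq_one hl, sub_self]
      rw [this, zero_mul]
  have hzero : ∑ x ∈ T, ∏ i, w (x i) = 0 := by
    rw [← hsplit]
    exact sum_eval_mul_weight A₀ w
      (fun j hj => sum_pow_mul_nodalWeight A₀ j hj) P hPdeg'
  -- 0 belongs to T
  have h0T : (fun _ : Fin k => (0 : ZMod p)) ∈ T := by
    rw [hTdef, Finset.mem_filter]
    constructor
    · rw [Fintype.mem_piFinset]
      intro i; exact Finset.mem_insert_self 0 A'
    · intro l; simp
  -- there is a nonzero solution
  have hex : ∃ x ∈ T, x ≠ (fun _ : Fin k => (0 : ZMod p)) := by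
    by_contra h
    push_neg at h
    have hT : T = {fun _ : Fin k => (0 : ZMod p)} := by
      apply Finset.eq_singleton_iff_unique_mem.mpr
      exact ⟨h0T, fun x hx => h x hx⟩
    rw [hT, Finset.sum_singleton, Finset.prod_const, Finset.card_univ, Fintype.card_fin] at hzero
    exact pow_ne_zero k hw0 hzero
  obtain ⟨x, hxT, hxne⟩ := hex
  rw [hTdef, Finset.mem_filter, Fintype.mem_piFinset] at hxT
  obtain ⟨hxmem, hxsol⟩ := hxT
  -- construct the subsequence and coefficients
  set s : Finset (Fin k) := Finset.univ.filter (fun i => x i ≠ 0) with hsdef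
  have hsne : s.Nonempty := by
    rw [Finset.filter_nonempty_iff]
    by_contra h
    push_neg at h
    apply hxne
    funext i
    exact h i (Finset.mem_univ i)
  set a : Fin k → ℕ := fun i =>
    if h : ∃ b, b ∈ A ∧ (b : ZMod p) = x i then h.choose else 0 with hadef
  have ha : ∀ i ∈ s, a i ∈ A ∧ ((a i : ℕ) : ZMod p) = x i := by
    intro i hi
    rw [hsdef, Finset.mem_filter] at hi
    have hxi := hxmem i
    rw [hA₀def, Finset.mem_insert] at hxi
    rcases hxi with h0 | hmem
    · exact absurd h0 hi.2
    · obtain ⟨b, hb, hcast⟩ := Finset.mem_image.mp hmem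
      have hexb : ∃ b, b ∈ A ∧ (b : ZMod p) = x i := ⟨b, hb, hcast⟩
      rw [hadef]
      simp only [dif_pos hexb]
      exact hexb.choose_spec
  refine ⟨s, hsne, a, fun i hi => (ha i hi).1, ?_⟩
  funext l
  have : (∑ i ∈ s, a i • g i) l = ∑ i ∈ s, (a i : ZMod p) * g i l := by
    rw [Finset.sum_apply]
    refine Finset.sum_congr rfl fun i _ => ?_
    simp [nsmul_eq_mul]
  rw [this]
  have h2 : ∑ i ∈ s, (a i : ZMod p) * g i l = ∑ i ∈ s, g i l * x i := by
    refine Finset.sum_congr rfl fun i hi => ?_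
    rw [(ha i hi).2, mul_comm]
  rw [h2]
  have h3 : ∑ i ∈ s, g i l * x i = ∑ i : Fin k, g i l * x i := by
    rw [hsdef]
    exact Finset.sum_filter_of_ne fun i _ hne hx0 => hne (by rw [hx0, mul_zero])
  rw [h3, hxsol l]
  rfl
end

section
/- Let p be a prime and d ≥ 1. With A = {1, 2, ..., p-1}, the constant d_A((Z/pZ)^d) equals d+1: every sequence of d+1 elements of (Z/pZ)^d admits a nonempty subsequence with a zero linear combination using coefficients from A, and the sequence of standard basis vectors e_1,...,e_d admits no such combination. -/
theorem stmt4 {p d : ℕ} (hp : p.Prime) (hd : 1 ≤ d) :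
    IsLeast {t : ℕ | ∀ g : Fin t → (Fin d → ZMod p),
      hasZeroComb (Finset.Icc 1 (p - 1)) g} (d + 1) := by
  haveI : Fact p.Prime := ⟨hp⟩
  constructor
  · -- membership: any d+1 vectors are dependent
    intro g
    have hnli : ¬ LinearIndependent (ZMod p) g := by
      intro h
      have := h.fintype_card_le_finrank
      simp [Module.finrank_fin_fun] at this
    rw [Fintype.not_linearIndependent_iff] at hnli
    obtain ⟨c, hc, i0, hi0⟩ := hnli
    refine ⟨Finset.univ.filter (fun i => c i ≠ 0), ⟨i0, by simp [hi0]⟩,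
      fun i => (c i).val, ?_, ?_⟩
    · intro i hi
      simp only [Finset.mem_filter] at hi
      have hlt := ZMod.val_lt (c i)
      have hne : (c i).val ≠ 0 := fun h => hi.2 ((ZMod.val_eq_zero _).mp h)
      simp only [Finset.mem_Icc]
      omega
    · have heq : ∀ i : Fin (d+1), (c i).val • g i = c i • g i := by
        intro i
        rw [← Nat.cast_smul_eq_nsmul (ZMod p), ZMod.natCast_val, ZMod.cast_id]
      rw [Finset.sum_congr rfl (fun i _ => heq i), Finset.sum_filter_of_ne, hc]
      intro i _ hne hcz
      exact hne (by simp [hcz])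
  · -- lower bound
    intro t ht
    by_contra hlt
    push_neg at hlt
    have htd : t ≤ d := by omega
    have := ht (fun i => Pi.single (Fin.castLE htd i) 1)
    obtain ⟨s, ⟨i0, hi0⟩, a, ha, hsum⟩ := this
    have := congrFun hsum (Fin.castLE htd i0)
    rw [Finset.sum_apply] at this
    have hzero : ((a i0 : ℕ) : ZMod p) = 0 := by
      rw [Finset.sum_eq_single i0] at this
      · simpa using this
      · intro i hi hne
        have : Fin.castLE htd i ≠ Fin.castLE htd i0 := fun h => hne (Fin.castLE_injective htd h)
        simp [Pi.single_apply, this]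
      · intro h; exact absurd hi0 h
    have hdvd : p ∣ a i0 := (ZMod.natCast_eq_zero_iff _ _).mp hzero
    have hmem := ha i0 hi0
    simp only [Finset.mem_Icc] at hmem
    have hp2 := hp.two_le
    have := Nat.le_of_dvd (by omega) hdvd
    omega
end

section
/- Let p be an odd prime and d ≥ 1, and let A_1 = {a ∈ {1,...,p-1} : a is a quadratic residue mod p}. Then d_{A_1}((Z/pZ)^d) = 2d+1. -/
set_option maxHeartbeats 1000000 in
open MvPolynomial in
lemma upper_bound_aux {p d : ℕ} [Fact p.Prime] (A1 : Finset ℕ)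
    (hA1 : ∀ a, a ∈ A1 ↔ a ∈ Finset.Icc 1 (p - 1) ∧ IsSquare (a : ZMod p))
    (g : Fin (2 * d + 1) → (Fin d → ZMod p)) : hasZeroComb A1 g := by
  classical
  have hp : p.Prime := Fact.out
  set f : Fin d → MvPolynomial (Fin (2 * d + 1)) (ZMod p) :=
    fun j => ∑ i, MvPolynomial.C (g i j) * MvPolynomial.X i ^ 2 with hf
  have hdeg : ∀ j, (f j).totalDegree ≤ 2 := by
    intro j
    refine (totalDegree_finset_sum _ _).trans (Finset.sup_le fun i _ => ?_)
    calc (C (g i j) * X i ^ 2).totalDegree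
        ≤ (C (g i j)).totalDegree + ((X i : MvPolynomial (Fin (2*d+1)) (ZMod p)) ^ 2).totalDegree :=
          totalDegree_mul _ _
      _ ≤ 0 + 2 := by
          rw [totalDegree_C, totalDegree_X_pow]
      _ = 2 := by omega
  have hlt : (∑ j, (f j).totalDegree) < Fintype.card (Fin (2 * d + 1)) := by
    have h1 : (∑ j : Fin d, (f j).totalDegree) ≤ ∑ _j : Fin d, 2 :=
      Finset.sum_le_sum fun j _ => hdeg j
    simp only [Finset.sum_const, Finset.card_univ, Fintype.card_fin, smul_eq_mul] at h1
    simp only [Fintype.card_fin]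
    omega
  have hdvd : p ∣ Fintype.card { x : Fin (2 * d + 1) → ZMod p // ∀ j, eval x (f j) = 0 } := by
    have h := char_dvd_card_solutions_of_fintype_sum_lt (K := ZMod p) p hlt
    convert h using 2
  have h0mem : ∀ j, eval (0 : Fin (2 * d + 1) → ZMod p) (f j) = 0 := by
    intro j
    simp [hf]
  have hcard : 1 < Fintype.card { x : Fin (2 * d + 1) → ZMod p // ∀ j, eval x (f j) = 0 } := by
    have h1 : 0 < Fintype.card { x : Fin (2 * d + 1) → ZMod p // ∀ j, eval x (f j) = 0 } :=
      Fintype.card_pos_iff.2 ⟨⟨0, h0mem⟩⟩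
    have := Nat.le_of_dvd h1 hdvd
    have := hp.two_le
    omega
  obtain ⟨x, hx⟩ := Fintype.exists_ne_of_one_lt_card hcard ⟨0, h0mem⟩
  have hx0 : x.1 ≠ 0 := fun h => hx (Subtype.ext h)
  obtain ⟨i1, hi1⟩ := Function.ne_iff.1 hx0
  refine ⟨Finset.univ.filter (fun i => x.1 i ≠ 0), ⟨i1, by simpa using hi1⟩,
    fun i => ((x.1 i) ^ 2).val, ?_, ?_⟩
  · intro i hi
    simp only [Finset.mem_filter, Finset.mem_univ, true_and] at hi
    have hsq : (x.1 i) ^ 2 ≠ 0 := pow_ne_zero _ hi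
    have hvne : ((x.1 i) ^ 2).val ≠ 0 := fun h => hsq ((ZMod.val_eq_zero _).1 h)
    have hvlt : ((x.1 i) ^ 2).val < p := ZMod.val_lt _
    rw [hA1]
    refine ⟨Finset.mem_Icc.2 ⟨Nat.one_le_iff_ne_zero.2 hvne, Nat.le_pred_of_lt hvlt⟩, ?_⟩
    rw [ZMod.natCast_val, ZMod.cast_id]
    exact ⟨x.1 i, by ring⟩
  · funext j
    have hev : eval x.1 (f j) = 0 := x.2 j
    have : (∑ i : Fin (2 * d + 1), g i j * x.1 i ^ 2) = 0 := by
      simpa [hf] using hev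
    rw [Finset.sum_apply]
    calc ∑ i ∈ Finset.univ.filter (fun i => x.1 i ≠ 0), (((x.1 i) ^ 2).val • g i) j
        = ∑ i ∈ Finset.univ.filter (fun i => x.1 i ≠ 0), g i j * x.1 i ^ 2 := by
          refine Finset.sum_congr rfl fun i _ => ?_
          simp only [Pi.smul_apply]
          rw [nsmul_eq_mul, ZMod.natCast_val, ZMod.cast_id, mul_comm]
      _ = ∑ i : Fin (2 * d + 1), g i j * x.1 i ^ 2 := by
          refine Finset.sum_subset (Finset.subset_univ _) fun i _ hi => ?_
          simp only [Finset.mem_filter, Finset.mem_univ, true_and, not_not] at hi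
          simp [hi]
      _ = 0 := this

lemma lower_bound_aux {p d t : ℕ} [Fact p.Prime] (hodd : Odd p) (A1 : Finset ℕ)
    (hA1 : ∀ a, a ∈ A1 ↔ a ∈ Finset.Icc 1 (p - 1) ∧ IsSquare (a : ZMod p))
    (ht : t ≤ 2 * d) :
    ∃ g : Fin t → (Fin d → ZMod p), ¬ hasZeroComb A1 g := by
  classical
  have hp : p.Prime := Fact.out
  have hp2 : p ≠ 2 := by rintro rfl; simp [Nat.odd_iff] at hodd
  obtain ⟨u, hu⟩ : ∃ u : ZMod p, ¬ IsSquare u := by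
    apply FiniteField.exists_nonsquare
    rw [ZMod.ringChar_zmod_n]; exact hp2
  set c : ZMod p := -u with hc
  have hcns : ¬ IsSquare (-c) := by simpa [hc]
  have hc0 : c ≠ 0 := by
    intro h
    exact hcns (by rw [h, neg_zero]; exact ⟨0, by ring⟩)
  -- facts about elements of A1
  have hA1ne : ∀ a ∈ A1, ((a : ZMod p) ≠ 0) := by
    intro a ha h
    rw [hA1] at ha
    obtain ⟨hi, _⟩ := ha
    rw [Finset.mem_Icc] at hi
    have := (ZMod.natCast_eq_zero_iff a p).1 h
    have := Nat.le_of_dvd (by omega) this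
    have := hp.two_le
    omega
  have hA1sq : ∀ a ∈ A1, IsSquare ((a : ZMod p)) := fun a ha => ((hA1 a).1 ha).2
  refine ⟨fun i k => if (k : ℕ) = (i : ℕ) / 2 then (if Even (i : ℕ) then 1 else c) else 0, ?_⟩
  rintro ⟨s, ⟨i0, hi0⟩, a, ha, hsum⟩
  have hj0 : (i0 : ℕ) / 2 < d := by have := i0.2; omega
  set k0 : Fin d := ⟨(i0 : ℕ) / 2, hj0⟩ with hk0
  have h0 := congrFun hsum k0
  rw [Finset.sum_apply] at h0
  simp only [Pi.zero_apply] at h0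
  set T : Finset (Fin t) := s.filter (fun i => ((i : ℕ) / 2 = (i0 : ℕ) / 2)) with hT
  have hTsum : (∑ i ∈ T, (a i : ZMod p) * (if Even (i : ℕ) then 1 else c)) = 0 := by
    rw [← h0]
    rw [hT, Finset.sum_filter]
    refine Finset.sum_congr rfl fun i hi => ?_
    simp only [Pi.smul_apply, nsmul_eq_mul, Pi.zero_apply]
    by_cases hcase : (i : ℕ) / 2 = (i0 : ℕ) / 2
    · simp [hcase, hk0]
    · simp [hcase, hk0, Ne.symm hcase]
  set Te : Finset (Fin t) := T.filter (fun i => Even (i : ℕ)) with hTe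
  set To : Finset (Fin t) := T.filter (fun i => ¬ Even (i : ℕ)) with hTo
  have hTsplit : (∑ i ∈ T, (a i : ZMod p) * (if Even (i : ℕ) then 1 else c))
      = (∑ i ∈ Te, (a i : ZMod p)) + (∑ i ∈ To, (a i : ZMod p)) * c := by
    rw [← Finset.sum_filter_add_sum_filter_not T (fun i => Even (i : ℕ)), Finset.sum_mul,
      ← hTe, ← hTo]
    congr 1
    · refine Finset.sum_congr rfl fun i hi => ?_
      rw [hTe, Finset.mem_filter] at hi
      rw [if_pos hi.2, mul_one]
    · refine Finset.sum_congr rfl fun i hi => ?_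
      rw [hTo, Finset.mem_filter] at hi
      rw [if_neg hi.2]
  have hsplit : (∑ i ∈ Te, (a i : ZMod p)) + (∑ i ∈ To, (a i : ZMod p)) * c = 0 := by
    rw [← hTsplit]; exact hTsum
  have hTecard : ∀ x ∈ Te, ∀ y ∈ Te, x = y := by
    intro x hx y hy
    simp only [hTe, hT, Finset.mem_filter, Nat.even_iff] at hx hy
    exact Fin.ext (by omega)
  have hTocard : ∀ x ∈ To, ∀ y ∈ To, x = y := by
    intro x hx y hy
    simp only [hTo, hT, Finset.mem_filter, Nat.even_iff] at hx hy
    exact Fin.ext (by omega)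
  have hTes : Te ⊆ s := fun x hx => by
    simp only [hTe, hT, Finset.mem_filter] at hx; exact hx.1.1
  have hTos : To ⊆ s := fun x hx => by
    simp only [hTo, hT, Finset.mem_filter] at hx; exact hx.1.1
  have hsingle : ∀ (F : Finset (Fin t)), F ⊆ s → (∀ x ∈ F, ∀ y ∈ F, x = y) →
      (∑ i ∈ F, (a i : ZMod p)) = 0 ∨
        ∃ x ∈ F, (∑ i ∈ F, (a i : ZMod p)) = (a x : ZMod p) := by
    intro F hFs hF1
    rcases F.eq_empty_or_nonempty with h | ⟨x, hx⟩
    · left; simp [h]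
    · right
      have hFx : F = {x} :=
        Finset.eq_singleton_iff_unique_mem.2 ⟨hx, fun y hy => hF1 y hy x hx⟩
      exact ⟨x, hx, by rw [hFx, Finset.sum_singleton]⟩
  have hi0T : i0 ∈ T := by simp [hT, hi0]
  -- key: a square but -c not square
  have hinv : ∀ b : ZMod p, IsSquare b → IsSquare b⁻¹ := by
    rintro b ⟨r, rfl⟩
    exact ⟨r⁻¹, by rw [mul_inv]⟩
  have hcontr : ∀ x ∈ s, ∀ y ∈ s,
      (a x : ZMod p) + (a y : ZMod p) * c = 0 → False := by
    intro x hx y hy h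
    have hax := hA1ne _ (ha x hx)
    have hay := hA1ne _ (ha y hy)
    have hsx := hA1sq _ (ha x hx)
    have hsy := hA1sq _ (ha y hy)
    have hcc : -c = (a x : ZMod p) * (a y : ZMod p)⁻¹ := by
      field_simp
      linear_combination -h
    exact hcns (hcc ▸ hsx.mul (hinv _ hsy))
  rcases hsingle Te hTes hTecard with hα | ⟨x, hxe, hαx⟩ <;>
    rcases hsingle To hTos hTocard with hβ | ⟨y, hyo, hβy⟩
  · -- both empty sums zero: but i0 is in Te or To
    have hmem : i0 ∈ Te ∨ i0 ∈ To := by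
      by_cases h : Even (i0 : ℕ)
      · left; rw [hTe, Finset.mem_filter]; exact ⟨hi0T, h⟩
      · right; rw [hTo, Finset.mem_filter]; exact ⟨hi0T, h⟩
    rcases hmem with h | h
    · have hFx : Te = {i0} :=
        Finset.eq_singleton_iff_unique_mem.2 ⟨h, fun y hy => hTecard y hy i0 h⟩
      rw [hFx, Finset.sum_singleton] at hα
      exact hA1ne _ (ha i0 hi0) hα
    · have hFx : To = {i0} :=
        Finset.eq_singleton_iff_unique_mem.2 ⟨h, fun y hy => hTocard y hy i0 h⟩
      rw [hFx, Finset.sum_singleton] at hβ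
      exact hA1ne _ (ha i0 hi0) hβ
  · rw [hα, zero_add, hβy] at hsplit
    rcases mul_eq_zero.1 hsplit with h | h
    · exact hA1ne _ (ha y (hTos hyo)) h
    · exact hc0 h
  · rw [hβ, zero_mul, add_zero] at hsplit
    exact hA1ne _ (ha x (hTes hxe)) (hαx ▸ hsplit)
  · rw [hαx, hβy] at hsplit
    exact hcontr x (hTes hxe) y (hTos hyo) hsplit

theorem stmt5 {p d : ℕ} (hp : p.Prime) (hodd : Odd p) (hd : 1 ≤ d)
    (A1 : Finset ℕ)
    (hA1 : ∀ a, a ∈ A1 ↔ a ∈ Finset.Icc 1 (p - 1) ∧ IsSquare (a : ZMod p)) :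
    IsLeast {t : ℕ | ∀ g : Fin t → (Fin d → ZMod p), hasZeroComb A1 g}
      (2 * d + 1) := by
  haveI : Fact p.Prime := ⟨hp⟩
  constructor
  · intro g
    exact upper_bound_aux A1 hA1 g
  · intro t ht
    by_contra hlt
    push_neg at hlt
    obtain ⟨g, hg⟩ := lower_bound_aux (d := d) (t := t) hodd A1 hA1 (by omega)
    exact hg (ht g)
end

section
/- Let p be an odd prime and d ≥ 1, and let A_2 = {a ∈ {1,...,p-1} : a is a quadratic non-residue mod p}. Then d_{A_2}((Z/pZ)^d) = 2d+1. -/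
section Aux

open MvPolynomial

lemma cw_step {p : ℕ} [Fact p.Prime] {n d : ℕ} (hn : 2 * d < n)
    (g : Fin n → Fin d → ZMod p) :
    ∃ x : Fin n → ZMod p, x ≠ 0 ∧ ∀ j, ∑ i, g i j * x i ^ 2 = 0 := by
  classical
  set f : Fin d → MvPolynomial (Fin n) (ZMod p) :=
    fun j => ∑ i, MvPolynomial.C (g i j) * MvPolynomial.X i ^ 2 with hf
  have hdeg : ∀ j, (f j).totalDegree ≤ 2 := by
    intro j
    refine le_trans (totalDegree_finset_sum _ _) ?_
    apply Finset.sup_le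
    intro i _
    refine le_trans (totalDegree_mul _ _) ?_
    rw [totalDegree_C, zero_add]
    refine le_trans (totalDegree_pow _ _) ?_
    simp [totalDegree_X]
  have hsum : (∑ j, (f j).totalDegree) < Fintype.card (Fin n) := by
    calc (∑ j : Fin d, (f j).totalDegree) ≤ ∑ _j : Fin d, 2 :=
          Finset.sum_le_sum (fun j _ => hdeg j)
      _ = 2 * d := by simp [mul_comm]
      _ < Fintype.card (Fin n) := by simpa using hn
  have hdvd := char_dvd_card_solutions_of_fintype_sum_lt p hsum
  have h0 : ∀ j, MvPolynomial.eval (0 : Fin n → ZMod p) (f j) = 0 := by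
    intro j; simp [hf]
  have hpos : 0 < Fintype.card { x : Fin n → ZMod p // ∀ j, MvPolynomial.eval x (f j) = 0 } :=
    Fintype.card_pos_iff.mpr ⟨⟨0, h0⟩⟩
  have hdvd' : p ∣ Fintype.card { x : Fin n → ZMod p // ∀ j, MvPolynomial.eval x (f j) = 0 } := by
    convert hdvd using 2 <;> exact Subsingleton.elim _ _
  have h2 : 1 < Fintype.card { x : Fin n → ZMod p // ∀ j, MvPolynomial.eval x (f j) = 0 } :=
    lt_of_lt_of_le (Fact.out : p.Prime).one_lt (Nat.le_of_dvd hpos hdvd')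
  obtain ⟨⟨x, hx⟩, hne⟩ := Fintype.exists_ne_of_one_lt_card h2 ⟨0, h0⟩
  refine ⟨x, ?_, ?_⟩
  · intro h
    exact hne (Subtype.ext h)
  · intro j
    have := hx j
    simpa [hf] using this

lemma mul_nonsquare {p : ℕ} [Fact p.Prime] (hodd : Odd p) {x y : ZMod p}
    (hx : ¬ IsSquare x) (hy : ¬ IsSquare y) : IsSquare (x * y) := by
  have hchar : ringChar (ZMod p) ≠ 2 := by
    rw [ZMod.ringChar_zmod_n]
    rintro rfl
    obtain ⟨k, hk⟩ := hodd
    omega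
  have hx0 : x ≠ 0 := fun h => hx (h ▸ ⟨0, by simp⟩)
  have hy0 : y ≠ 0 := fun h => hy (h ▸ ⟨0, by simp⟩)
  have hcx : quadraticChar (ZMod p) x = -1 :=
    (quadraticChar_neg_one_iff_not_isSquare).mpr hx
  have hcy : quadraticChar (ZMod p) y = -1 :=
    (quadraticChar_neg_one_iff_not_isSquare).mpr hy
  have : quadraticChar (ZMod p) (x * y) = 1 := by
    rw [map_mul, hcx, hcy]; ring
  exact (quadraticChar_one_iff_isSquare (mul_ne_zero hx0 hy0)).mp this

end Aux

theorem stmt6 {p d : ℕ} (hp : p.Prime) (hodd : Odd p) (hd : 1 ≤ d)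
    (A2 : Finset ℕ)
    (hA2 : ∀ a, a ∈ A2 ↔ a ∈ Finset.Icc 1 (p - 1) ∧ ¬ IsSquare (a : ZMod p)) :
    IsLeast {t : ℕ | ∀ g : Fin t → (Fin d → ZMod p), hasZeroComb A2 g}
      (2 * d + 1) := by
  haveI : Fact p.Prime := ⟨hp⟩
  have hchar : ringChar (ZMod p) ≠ 2 := by
    rw [ZMod.ringChar_zmod_n]
    rintro rfl
    obtain ⟨k, hk⟩ := hodd
    omega
  obtain ⟨η, hη⟩ := FiniteField.exists_nonsquare hchar
  have hη0 : η ≠ 0 := fun h => hη (h ▸ ⟨0, by simp⟩)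
  -- membership in A2 from a nonzero nonsquare element of ZMod p
  have memA2 : ∀ z : ZMod p, ¬ IsSquare z → z.val ∈ A2 ∧ ((z.val : ZMod p) = z) := by
    intro z hz
    have hz0 : z ≠ 0 := fun h => hz (h ▸ ⟨0, by simp⟩)
    have hcast : ((z.val : ℕ) : ZMod p) = z := ZMod.natCast_rightInverse z
    refine ⟨(hA2 _).mpr ⟨?_, by rwa [hcast]⟩, hcast⟩
    rw [Finset.mem_Icc]
    constructor
    · have : z.val ≠ 0 := fun h => hz0 ((ZMod.val_eq_zero z).mp h)
      omega
    · have := ZMod.val_lt z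
      omega
  constructor
  · -- 2d+1 is in the set
    intro g
    obtain ⟨x, hx0, hx⟩ := cw_step (p := p) (n := 2 * d + 1) (by omega) g
    classical
    refine ⟨Finset.univ.filter (fun i => x i ≠ 0), ?_, fun i => (η * x i ^ 2).val, ?_, ?_⟩
    · obtain ⟨i, hi⟩ := Function.ne_iff.mp hx0
      simp only [Pi.zero_apply] at hi
      exact ⟨i, by simp [hi]⟩
    · intro i hi
      simp only [Finset.mem_filter] at hi
      refine (memA2 _ ?_).1
      intro ⟨r, hr⟩
      apply hη
      refine ⟨r * (x i)⁻¹, ?_⟩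
      have hxi : x i ≠ 0 := hi.2
      field_simp
      linear_combination hr
    · funext j
      have hcast : ∀ i : Fin (2 * d + 1),
          (((η * x i ^ 2).val : ℕ) : ZMod p) = η * x i ^ 2 := by
        intro i
        simp [ZMod.natCast_val, ZMod.cast_id]
      have : ∑ i ∈ Finset.univ.filter (fun i => x i ≠ 0),
          (η * x i ^ 2) * g i j = 0 := by
        have hfil : ∑ i ∈ Finset.univ.filter (fun i => x i ≠ 0), (η * x i ^ 2) * g i j
            = ∑ i, (η * x i ^ 2) * g i j :=
          Finset.sum_filter_of_ne (fun i _ hne => by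
            by_contra hxi
            simp [hxi] at hne)
        rw [hfil]
        have hj := hx j
        calc ∑ i, (η * x i ^ 2) * g i j = η * ∑ i, g i j * x i ^ 2 := by
              rw [Finset.mul_sum]; exact Finset.sum_congr rfl (fun i _ => by ring)
          _ = 0 := by rw [hj, mul_zero]
      have expand : (∑ i ∈ Finset.univ.filter (fun i => x i ≠ 0),
              ((η * x i ^ 2).val • g i)) j
          = ∑ i ∈ Finset.univ.filter (fun i => x i ≠ 0), (η * x i ^ 2) * g i j := by
        rw [Finset.sum_apply]
        refine Finset.sum_congr rfl (fun i _ => ?_)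
        rw [Pi.smul_apply, nsmul_eq_mul, hcast i]
      show (∑ i ∈ Finset.univ.filter (fun i => x i ≠ 0),
              ((η * x i ^ 2).val • g i)) j = 0
      rw [expand]
      exact this
  · -- lower bound
    intro t ht
    by_contra hlt
    push_neg at hlt
    have ht2d : t ≤ 2 * d := by omega
    classical
    -- counterexample sequence of length t
    set g : Fin t → Fin d → ZMod p := fun i j =>
      if (i : ℕ) / 2 = (j : ℕ) then (if (i : ℕ) % 2 = 0 then 1 else -η) else 0 with hg
    obtain ⟨s, ⟨i0, hi0⟩, a, ha, hsum⟩ := ht g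
    -- coefficients are nonzero nonsquares
    have hns : ∀ i ∈ s, ¬ IsSquare ((a i : ℕ) : ZMod p) := fun i hi =>
      ((hA2 _).mp (ha i hi)).2
    have hnz : ∀ i ∈ s, ((a i : ℕ) : ZMod p) ≠ 0 := by
      intro i hi h
      exact hns i hi (h ▸ ⟨0, by simp⟩)
    have hj0 : (i0 : ℕ) / 2 < d := by
      have := i0.2
      omega
    set j0 : Fin d := ⟨(i0 : ℕ) / 2, hj0⟩ with hj0def
    have hsumj : ∑ i ∈ s, ((a i : ℕ) : ZMod p) * g i j0 = 0 := by
      have := congrFun hsum j0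
      simpa [Finset.sum_apply, nsmul_eq_mul] using this
    -- split the sum
    set s0 := s.filter (fun i : Fin t => (i : ℕ) = 2 * (j0 : ℕ)) with hs0
    set s1 := s.filter (fun i : Fin t => (i : ℕ) = 2 * (j0 : ℕ) + 1) with hs1
    have hsplit : ∑ i ∈ s, ((a i : ℕ) : ZMod p) * g i j0
        = (∑ i ∈ s0, ((a i : ℕ) : ZMod p)) + (∑ i ∈ s1, ((a i : ℕ) : ZMod p)) * (-η) := by
      have hdisj : ∀ i ∈ s, i ∉ s0 → i ∉ s1 → ((a i : ℕ) : ZMod p) * g i j0 = 0 := by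
        intro i hi h0 h1
        have h0' : (i : ℕ) ≠ 2 * (j0 : ℕ) := by
          intro h; exact h0 (Finset.mem_filter.mpr ⟨hi, h⟩)
        have h1' : (i : ℕ) ≠ 2 * (j0 : ℕ) + 1 := by
          intro h; exact h1 (Finset.mem_filter.mpr ⟨hi, h⟩)
        have : (i : ℕ) / 2 ≠ (j0 : ℕ) := by omega
        simp [hg, this]
      have h0val : ∀ i ∈ s0, ((a i : ℕ) : ZMod p) * g i j0 = ((a i : ℕ) : ZMod p) := by
        intro i hi
        obtain ⟨_, hiv⟩ := Finset.mem_filter.mp hi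
        have h1 : (i : ℕ) / 2 = (j0 : ℕ) := by omega
        have h2 : (i : ℕ) % 2 = 0 := by omega
        simp [hg, h1, h2]
      have h1val : ∀ i ∈ s1, ((a i : ℕ) : ZMod p) * g i j0 = ((a i : ℕ) : ZMod p) * (-η) := by
        intro i hi
        obtain ⟨_, hiv⟩ := Finset.mem_filter.mp hi
        have h1 : (i : ℕ) / 2 = (j0 : ℕ) := by omega
        have h2 : ¬ ((i : ℕ) % 2 = 0) := by omega
        simp [hg, h1, h2]
      rw [← Finset.sum_filter_add_sum_filter_not s (fun i : Fin t => (i : ℕ) = 2 * (j0 : ℕ))]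
      rw [← Finset.sum_filter_add_sum_filter_not
        (s.filter (fun i : Fin t => ¬ (i : ℕ) = 2 * (j0 : ℕ))) (fun i : Fin t => (i : ℕ) = 2 * (j0 : ℕ) + 1)]
      have e0 : ∑ i ∈ s.filter (fun i : Fin t => (i : ℕ) = 2 * (j0 : ℕ)),
          ((a i : ℕ) : ZMod p) * g i j0 = ∑ i ∈ s0, ((a i : ℕ) : ZMod p) :=
        Finset.sum_congr rfl (fun i hi => h0val i hi)
      have e1 : ∑ i ∈ (s.filter (fun i : Fin t => ¬ (i : ℕ) = 2 * (j0 : ℕ))).filter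
            (fun i : Fin t => (i : ℕ) = 2 * (j0 : ℕ) + 1),
          ((a i : ℕ) : ZMod p) * g i j0 = (∑ i ∈ s1, ((a i : ℕ) : ZMod p)) * (-η) := by
        rw [Finset.filter_filter, Finset.sum_mul]
        have hset : s.filter (fun i : Fin t => ¬ (i : ℕ) = 2 * (j0 : ℕ) ∧ (i : ℕ) = 2 * (j0 : ℕ) + 1)
            = s1 := by
          apply Finset.filter_congr
          intro i _
          constructor
          · rintro ⟨_, h⟩; exact h
          · intro h; exact ⟨by omega, h⟩
        rw [hset]
        exact Finset.sum_congr rfl (fun i hi => h1val i hi)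
      have e2 : ∑ i ∈ (s.filter (fun i : Fin t => ¬ (i : ℕ) = 2 * (j0 : ℕ))).filter
            (fun i : Fin t => ¬ (i : ℕ) = 2 * (j0 : ℕ) + 1),
          ((a i : ℕ) : ZMod p) * g i j0 = 0 := by
        apply Finset.sum_eq_zero
        intro i hi
        simp only [Finset.mem_filter] at hi
        exact hdisj i hi.1.1 (by simp [hs0, Finset.mem_filter]; intro _; exact hi.1.2)
          (by simp [hs1, Finset.mem_filter]; intro _; exact hi.2)
      rw [e0, e1, e2, add_zero]
    -- subsingleton filters
    have hsub : ∀ (m : ℕ) (u : Finset (Fin t)), u = s.filter (fun i : Fin t => (i : ℕ) = m) →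
        (∑ i ∈ u, ((a i : ℕ) : ZMod p)) = 0 ∨
        (∃ i ∈ s, (∑ i' ∈ u, ((a i' : ℕ) : ZMod p)) = ((a i : ℕ) : ZMod p)) := by
      intro m u hu
      rcases Finset.eq_empty_or_nonempty u with h | ⟨i, hi⟩
      · left; simp [h]
      · right
        have hcard : u.card ≤ 1 := by
          apply Finset.card_le_one.mpr
          intro x hx y hy
          rw [hu, Finset.mem_filter] at hx hy
          exact Fin.ext (hx.2.trans hy.2.symm)
        have : u = {i} := by
          apply Finset.eq_singleton_iff_unique_mem.mpr
          refine ⟨hi, fun x hx => ?_⟩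
          exact Finset.card_le_one.mp hcard x hx i hi
        rw [hu, Finset.mem_filter] at hi
        exact ⟨i, hi.1, by rw [this, Finset.sum_singleton]⟩
    set b := ∑ i ∈ s0, ((a i : ℕ) : ZMod p) with hb
    set c := ∑ i ∈ s1, ((a i : ℕ) : ZMod p) with hc
    have heq : b = η * c := by
      have : b + c * (-η) = 0 := by rw [← hsplit]; exact hsumj
      have : b = c * η := by linear_combination this
      rw [this]; ring
    have hbcase := hsub _ s0 hs0
    have hccase := hsub _ s1 hs1
    simp only [← hb] at hbcase
    simp only [← hc] at hccase
    -- i0 belongs to s0 or s1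
    have hi0mem : i0 ∈ s0 ∨ i0 ∈ s1 := by
      have h2 : (i0 : ℕ) % 2 = 0 ∨ (i0 : ℕ) % 2 = 1 := Nat.mod_two_eq_zero_or_one _
      rcases h2 with h2 | h2
      · left; rw [hs0, Finset.mem_filter]; exact ⟨hi0, by simp [hj0def]; omega⟩
      · right; rw [hs1, Finset.mem_filter]; exact ⟨hi0, by simp [hj0def]; omega⟩
    rcases hccase with hc0 | ⟨i1, hi1s, hc1⟩
    · -- c = 0, so b = 0, but then s0 must be "empty-like"; i0 forces contradiction
      have hb0 : b = 0 := by rw [heq, hc0, mul_zero]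
      rcases hi0mem with hmem | hmem
      · -- b is the single value a i0, nonzero
        rcases hbcase with h | ⟨i1, hi1s, hbv⟩
        · -- s0 nonempty but sum zero: contradiction via singleton
          have hcard : s0.card ≤ 1 := by
            apply Finset.card_le_one.mpr
            intro x hx y hy
            rw [hs0, Finset.mem_filter] at hx hy
            exact Fin.ext (hx.2.trans hy.2.symm)
          have hsing : s0 = {i0} := by
            apply Finset.eq_singleton_iff_unique_mem.mpr
            exact ⟨hmem, fun x hx => Finset.card_le_one.mp hcard x hx i0 hmem⟩
          rw [hb, hsing, Finset.sum_singleton] at hb0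
          exact hnz i0 hi0 hb0
        · rw [hbv] at hb0
          exact hnz i1 hi1s hb0
      · -- i0 ∈ s1 but c = 0
        have hcard : s1.card ≤ 1 := by
          apply Finset.card_le_one.mpr
          intro x hx y hy
          rw [hs1, Finset.mem_filter] at hx hy
          exact Fin.ext (hx.2.trans hy.2.symm)
        have hsing : s1 = {i0} := by
          apply Finset.eq_singleton_iff_unique_mem.mpr
          exact ⟨hmem, fun x hx => Finset.card_le_one.mp hcard x hx i0 hmem⟩
        rw [hc, hsing, Finset.sum_singleton] at hc0
        exact hnz i0 hi0 hc0
    · -- c = a i1 is a nonsquare, hence b = η * c is a square but also 0-or-nonsquare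
      have hcns : ¬ IsSquare c := by rw [hc1]; exact hns i1 hi1s
      have hbsq : IsSquare b := by rw [heq]; exact mul_nonsquare hodd hη hcns
      rcases hbcase with h | ⟨i2, hi2s, hbv⟩
      · rw [h] at heq
        have : c = 0 := by
          have := heq.symm
          rcases mul_eq_zero.mp this with h' | h'
          · exact absurd h' hη0
          · exact h'
        exact hnz i1 hi1s (hc1 ▸ this)
      · rw [hbv] at hbsq
        exact hns i2 hi2s hbsq
end

section
/- Let n be a positive integer and a ∈ {1,...,n} with gcd(a,n) = 1, and let A = {a, n-a}. Then d_A(Z/nZ) = 1 + ⌊log₂ n⌋. -/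
lemma geom_two_int (m : ℕ) : ∑ k ∈ Finset.range m, (2:ℤ)^k = 2^m - 1 := by
  induction m with
  | zero => simp
  | succ m ih => rw [Finset.sum_range_succ, ih]; ring

theorem stmt11 {n a : ℕ} (hn : 0 < n) (ha : a ∈ Finset.Icc 1 n)
    (hcop : Nat.gcd a n = 1) :
    IsLeast {t : ℕ | ∀ g : Fin t → ZMod n, hasZeroComb {a, n - a} g}
      (1 + Nat.log 2 n) := by
  simp only [Finset.mem_Icc] at ha
  obtain ⟨ha1, han⟩ := ha
  haveI : NeZero n := ⟨hn.ne'⟩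
  have hab : (a : ZMod n) * (a : ZMod n)⁻¹ = 1 := ZMod.coe_mul_inv_eq_one a hcop
  have hna : ((n - a : ℕ) : ZMod n) = -(a : ZMod n) := by
    rw [Nat.cast_sub han, ZMod.natCast_self, zero_sub]
  constructor
  · -- membership: every sequence of length 1 + log₂ n has a zero combination
    intro g
    have hcard : Fintype.card (ZMod n) < Fintype.card (Finset (Fin (1 + Nat.log 2 n))) := by
      rw [ZMod.card, Fintype.card_finset, Fintype.card_fin]
      calc n < 2 ^ (Nat.log 2 n + 1) := Nat.lt_pow_succ_log_self one_lt_two n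
        _ = 2 ^ (1 + Nat.log 2 n) := by rw [Nat.add_comm]
    obtain ⟨S, T, hST, hsum⟩ := Fintype.exists_ne_map_eq_of_card_lt
      (fun S : Finset (Fin (1 + Nat.log 2 n)) => ∑ i ∈ S, g i) hcard
    have hsum' : ∑ i ∈ S, g i = ∑ i ∈ T, g i := hsum
    have hdiff : ∑ i ∈ S \ T, g i = ∑ i ∈ T \ S, g i := by
      have h1 := Finset.sum_inter_add_sum_sdiff S T g
      have h2 := Finset.sum_inter_add_sum_sdiff T S g
      rw [Finset.inter_comm] at h2
      have := h1.trans (hsum'.trans h2.symm)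
      exact add_left_cancel this
    refine ⟨(S \ T) ∪ (T \ S), ?_, fun i => if i ∈ S \ T then a else n - a, ?_, ?_⟩
    · by_contra h
      rw [Finset.not_nonempty_iff_eq_empty, Finset.union_eq_empty,
        Finset.sdiff_eq_empty_iff_subset, Finset.sdiff_eq_empty_iff_subset] at h
      exact hST (le_antisymm h.1 h.2)
    · intro i _
      by_cases hi : i ∈ S \ T <;> simp [hi]
    · rw [Finset.sum_union disjoint_sdiff_sdiff]
      have e1 : ∑ i ∈ S \ T, (if i ∈ S \ T then a else n - a) • g i
          = (a : ZMod n) * ∑ i ∈ S \ T, g i := by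
        rw [Finset.mul_sum]
        exact Finset.sum_congr rfl fun i hi => by rw [if_pos hi, nsmul_eq_mul]
      have e2 : ∑ i ∈ T \ S, (if i ∈ S \ T then a else n - a) • g i
          = -((a : ZMod n) * ∑ i ∈ T \ S, g i) := by
        rw [Finset.mul_sum, ← Finset.sum_neg_distrib]
        refine Finset.sum_congr rfl fun i hi => ?_
        have hni : i ∉ S \ T := fun h => (Finset.mem_sdiff.mp h).2 (Finset.mem_sdiff.mp hi).1
        rw [if_neg hni, nsmul_eq_mul, hna, neg_mul]
      rw [e1, e2, hdiff, add_neg_cancel]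
  · -- lower bound
    intro t ht
    by_contra hlt
    push_neg at hlt
    have htl : t ≤ Nat.log 2 n := by omega
    set b := (a : ZMod n)⁻¹ with hb
    obtain ⟨s, hs, c, hc, hsum⟩ := ht (fun i => (2 : ZMod n) ^ (i : ℕ) * b)
    set ε : Fin t → ℤ := fun i => if c i = a then 1 else -1 with hε
    have key : ∀ i ∈ s, (c i) • ((2 : ZMod n) ^ (i : ℕ) * b)
        = ((ε i * 2 ^ (i : ℕ) : ℤ) : ZMod n) := by
      intro i hi
      have hci := hc i hi
      simp only [Finset.mem_insert, Finset.mem_singleton] at hci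
      by_cases h : c i = a
      · simp only [hε, if_pos h, h, nsmul_eq_mul]
        push_cast
        rw [one_mul]
        calc (a : ZMod n) * (2 ^ (i:ℕ) * b) = 2 ^ (i:ℕ) * ((a:ZMod n) * b) := by ring
          _ = 2 ^ (i:ℕ) := by rw [hab, mul_one]
      · have h' : c i = n - a := hci.resolve_left h
        simp only [hε, if_neg h, h', nsmul_eq_mul, hna]
        push_cast
        rw [neg_one_mul]
        calc -(a : ZMod n) * (2 ^ (i:ℕ) * b) = -(2 ^ (i:ℕ) * ((a:ZMod n) * b)) := by ring
          _ = -(2 ^ (i:ℕ)) := by rw [hab, mul_one]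
    set z : ℤ := ∑ i ∈ s, ε i * 2 ^ (i : ℕ) with hz
    have hzc : ((z : ℤ) : ZMod n) = 0 := by
      rw [hz, Int.cast_sum, ← hsum]
      exact (Finset.sum_congr rfl fun i hi => (key i hi).symm)
    have hdvd : (n : ℤ) ∣ z := (ZMod.intCast_zmod_eq_zero_iff_dvd z n).mp hzc
    have habs1 : ∀ i : Fin t, |ε i * 2 ^ (i:ℕ)| = 2 ^ (i:ℕ) := by
      intro i
      rw [abs_mul, abs_pow, abs_two]
      have : |ε i| = 1 := by simp only [hε]; split <;> simp
      rw [this, one_mul]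
    -- bound sums of powers over Fin sets
    have pow_sum_bound : ∀ (u : Finset (Fin t)) (m : ℕ), (∀ i ∈ u, (i:ℕ) < m) →
        ∑ i ∈ u, (2:ℤ) ^ (i:ℕ) ≤ 2 ^ m - 1 := by
      intro u m hu
      have himg : ∑ i ∈ u, (2:ℤ) ^ (i:ℕ) = ∑ k ∈ u.image Fin.val, (2:ℤ) ^ k := by
        rw [Finset.sum_image (fun x _ y _ h => Fin.val_injective h)]
      rw [himg, ← geom_two_int m]
      refine Finset.sum_le_sum_of_subset_of_nonneg ?_ (fun k _ _ => by positivity)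
      intro k hk
      obtain ⟨i, hi, rfl⟩ := Finset.mem_image.mp hk
      exact Finset.mem_range.mpr (hu i hi)
    -- z ≠ 0
    set j := s.max' hs with hj
    have hjs : j ∈ s := s.max'_mem hs
    have hsplit : z = ε j * 2 ^ (j:ℕ) + ∑ i ∈ s.erase j, ε i * 2 ^ (i:ℕ) := by
      rw [hz, ← Finset.add_sum_erase s _ hjs]
    have hrest : |∑ i ∈ s.erase j, ε i * 2 ^ (i:ℕ)| ≤ 2 ^ (j:ℕ) - 1 := by
      calc |∑ i ∈ s.erase j, ε i * 2 ^ (i:ℕ)| ≤ ∑ i ∈ s.erase j, |ε i * 2 ^ (i:ℕ)| :=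
            Finset.abs_sum_le_sum_abs _ _
        _ = ∑ i ∈ s.erase j, (2:ℤ) ^ (i:ℕ) := Finset.sum_congr rfl fun i _ => habs1 i
        _ ≤ 2 ^ (j:ℕ) - 1 := by
            refine pow_sum_bound _ _ fun i hi => ?_
            have h1 : i ≠ j := (Finset.mem_erase.mp hi).1
            have h2 : i ≤ j := s.le_max' i (Finset.mem_erase.mp hi).2
            exact lt_of_le_of_ne h2 (fun h => h1 (Fin.val_injective h))
    have hzne : z ≠ 0 := by
      intro h0
      have : |ε j * 2 ^ (j:ℕ)| ≤ |∑ i ∈ s.erase j, ε i * 2 ^ (i:ℕ)| := by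
        have : ε j * 2 ^ (j:ℕ) = -(∑ i ∈ s.erase j, ε i * 2 ^ (i:ℕ)) := by
          rw [hsplit] at h0; linarith
        rw [this, abs_neg]
      rw [habs1 j] at this
      have hpos : (1:ℤ) ≤ 2 ^ (j:ℕ) := by exact_mod_cast Nat.one_le_two_pow
      linarith
    have hzbound : |z| ≤ (n:ℤ) - 1 := by
      calc |z| ≤ ∑ i ∈ s, |ε i * 2 ^ (i:ℕ)| := Finset.abs_sum_le_sum_abs _ _
        _ = ∑ i ∈ s, (2:ℤ) ^ (i:ℕ) := Finset.sum_congr rfl fun i _ => habs1 i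
        _ ≤ 2 ^ t - 1 := pow_sum_bound _ _ fun i _ => i.isLt
        _ ≤ (n:ℤ) - 1 := by
            have h1 : (2:ℕ) ^ t ≤ 2 ^ Nat.log 2 n := Nat.pow_le_pow_right (by norm_num) htl
            have h2 : (2:ℕ) ^ Nat.log 2 n ≤ n := Nat.pow_log_le_self 2 hn.ne'
            have : (2:ℕ) ^ t ≤ n := h1.trans h2
            have := Int.ofNat_le.mpr this
            push_cast at this ⊢
            linarith
    have := Int.le_of_dvd (abs_pos.mpr hzne) ((dvd_abs _ _).mpr hdvd)
    linarith
end

section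
/- Let n, d ≥ 1 and A ⊆ {1,...,n} nonempty. If s_A((Z/nZ)^d) = d_A((Z/nZ)^d) + n - 1, then ZS_A((Z/nZ)^d) = d_A((Z/nZ)^d) + n^d - 1. -/
/-- A sequence `g` admits a subsequence of length exactly `m` with a zero linear
combination with coefficients drawn from `A`. -/
def hasZeroCombLen {G : Type*} [AddCommGroup G] (A : Finset ℕ) (m : ℕ) {k : ℕ} (g : Fin k → G) : Prop :=
  ∃ s : Finset (Fin k), s.card = m ∧ ∃ a : Fin k → ℕ,
    (∀ i ∈ s, a i ∈ A) ∧ ∑ i ∈ s, a i • g i = 0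

variable {ι κ G : Type*} [AddCommGroup G] {A : Finset ℕ}

def HasZeroCombOn (A : Finset ℕ) (g : ι → G) (s : Finset ι) : Prop :=
  ∃ a : ι → ℕ, (∀ i ∈ s, a i ∈ A) ∧ ∑ i ∈ s, a i • g i = 0

namespace HasZeroCombOn

lemma union [DecidableEq ι] {g : ι → G} {s t : Finset ι} (hs : HasZeroCombOn A g s)
    (ht : HasZeroCombOn A g t) (hst : Disjoint s t) : HasZeroCombOn A g (s ∪ t) := by
  obtain ⟨a, haA, has⟩ := hs
  obtain ⟨b, hbA, hbt⟩ := ht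
  have hb : ∀ i ∈ t, s.piecewise a b i = b i := fun i hi =>
    s.piecewise_eq_of_notMem _ _ (Finset.disjoint_right.mp hst hi)
  refine ⟨s.piecewise a b, fun i hi => ?_, ?_⟩
  · rcases Finset.mem_union.mp hi with hi | hi
    · rw [s.piecewise_eq_of_mem _ _ hi]; exact haA i hi
    · rw [hb i hi]; exact hbA i hi
  · have ha : ∑ i ∈ s, s.piecewise a b i • g i = ∑ i ∈ s, a i • g i :=
      Finset.sum_congr rfl fun i hi => by rw [s.piecewise_eq_of_mem _ _ hi]
    have hb' : ∑ i ∈ t, s.piecewise a b i • g i = ∑ i ∈ t, b i • g i :=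
      Finset.sum_congr rfl fun i hi => by rw [hb i hi]
    rw [Finset.sum_union hst, ha, hb', has, hbt, add_zero]

lemma map {g : κ → G} (f : ι ↪ κ) {s : Finset ι} (h : HasZeroCombOn A (g ∘ f) s) :
    HasZeroCombOn A g (s.map f) := by
  obtain ⟨a, haA, hsum⟩ := h
  refine ⟨Function.extend f a 0, ?_, ?_⟩
  · simpa [f.injective.extend_apply] using haA
  · simpa [f.injective.extend_apply] using hsum

lemma preimage {g : κ → G} (f : ι ↪ κ) {s : Finset κ} (h : HasZeroCombOn A g s)
    (hg : ∀ x ∉ Set.range f, g x = 0) :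
    HasZeroCombOn A (g ∘ f) (s.preimage f f.injective.injOn) := by
  obtain ⟨a, haA, hsum⟩ := h
  refine ⟨a ∘ f, fun i hi => haA _ (Finset.mem_preimage.mp hi), ?_⟩
  rw [← hsum]
  exact Finset.sum_preimage f s _ (fun x => a x • g x) fun x _ hx => by simp [hg x hx]

end HasZeroCombOn

lemma not_hasZeroComb_of_fin_zero (g : Fin 0 → G) : ¬hasZeroComb A g :=
  fun ⟨_, hs, _⟩ => hs.ne_empty (Subsingleton.elim _ _)

lemma hasZeroCombLen_of_le {m t t' : ℕ} (h : ∀ g : Fin t → G, hasZeroCombLen A m g)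
    (htt' : t ≤ t') (g : Fin t' → G) : hasZeroCombLen A m g := by
  obtain ⟨s, hs, hzero⟩ := h (g ∘ Fin.castLEEmb htt')
  exact ⟨s.map (Fin.castLEEmb htt'), by rw [Finset.card_map, hs], HasZeroCombOn.map _ hzero⟩

lemma exists_subset_hasZeroCombOn {E n : ℕ} (H : ∀ g : Fin (E + n) → G, hasZeroCombLen A n g)
    (g : ι → G) {S : Finset ι} (hS : E + n ≤ S.card) :
    ∃ s ⊆ S, s.card = n ∧ HasZeroCombOn A g s := by
  obtain ⟨e⟩ := Function.Embedding.nonempty_of_card_le (α := Fin (E + n)) (β := S) (by simpa)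
  let f := e.trans (Function.Embedding.subtype _)
  obtain ⟨s, hs, hzero⟩ := H (g ∘ f)
  refine ⟨s.map f, fun i hi => ?_, by rw [Finset.card_map, hs], HasZeroCombOn.map f hzero⟩
  obtain ⟨j, -, rfl⟩ := Finset.mem_map.mp hi
  exact (e j).2

lemma exists_subset_hasZeroCombOn_mul {E n : ℕ}
    (H : ∀ g : Fin (E + n) → G, hasZeroCombLen A n g) (g : ι → G) (k : ℕ) {S : Finset ι}
    (hS : E + k * n ≤ S.card) : ∃ s ⊆ S, s.card = k * n ∧ HasZeroCombOn A g s := by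
  classical
  induction k generalizing S with
  | zero => exact ⟨∅, by simp, by simp, fun _ => 0, by simp, by simp⟩
  | succ k ih =>
    rw [Nat.succ_mul] at hS
    obtain ⟨s₁, hs₁S, hs₁, hzero₁⟩ := exists_subset_hasZeroCombOn H g (S := S) (by omega)
    have hrest : E + k * n ≤ (S \ s₁).card := by
      rw [Finset.card_sdiff_of_subset hs₁S, hs₁]
      omega
    obtain ⟨s₂, hs₂S, hs₂, hzero₂⟩ := ih hrest
    have hdisj : Disjoint s₁ s₂ := Finset.disjoint_of_subset_right hs₂S Finset.disjoint_sdiff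
    refine ⟨s₁ ∪ s₂, Finset.union_subset hs₁S (hs₂S.trans Finset.sdiff_subset), ?_,
      hzero₁.union hzero₂ hdisj⟩
    rw [Finset.card_union_of_disjoint hdisj, hs₁, hs₂, Nat.succ_mul, add_comm]

lemma hasZeroCombLen_mul {E n : ℕ} (H : ∀ g : Fin (E + n) → G, hasZeroCombLen A n g) (k : ℕ)
    (g : Fin (E + k * n) → G) : hasZeroCombLen A (k * n) g := by
  obtain ⟨s, -, hs, hzero⟩ :=
    exists_subset_hasZeroCombOn_mul H g k (S := Finset.univ) (by simp)
  exact ⟨s, hs, hzero⟩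

lemma not_hasZeroCombLen_append_zero {E m : ℕ} {g₀ : Fin E → G} (hg₀ : ¬hasZeroComb A g₀) :
    ¬hasZeroCombLen A (m + 1) (Fin.append g₀ (0 : Fin m → G)) := by
  rintro ⟨s, hs, hzero⟩
  let s₀ := s.preimage (Fin.castAddEmb m) (Fin.castAddEmb m).injective.injOn
  have hcover : s ⊆ s₀.map (Fin.castAddEmb m) ∪ Finset.univ.map (Fin.natAddEmb E) := by
    intro i hi
    induction i using Fin.addCases with
    | left i => simp [s₀, hi]
    | right i => simp
  have hs₀ : s₀.Nonempty := by
    have := (Finset.card_le_card hcover).trans (Finset.card_union_le _ _)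
    simp only [Finset.card_map, Finset.card_univ, Fintype.card_fin] at this
    exact Finset.card_pos.mp (by omega)
  refine hg₀ ⟨s₀, hs₀, ?_⟩
  have hzero₀ := HasZeroCombOn.preimage (Fin.castAddEmb m) hzero fun x hx => by
    induction x using Fin.addCases with
    | left i => exact absurd ⟨i, rfl⟩ hx
    | right i => simp
  have hrestrict : Fin.append g₀ (0 : Fin m → G) ∘ Fin.castAddEmb m = g₀ := by
    ext i : 1
    simp
  rwa [hrestrict] at hzero₀

lemma add_le_of_hasZeroCombLen {E m t : ℕ} {g₀ : Fin E → G} (hg₀ : ¬hasZeroComb A g₀)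
    (ht : ∀ g : Fin t → G, hasZeroCombLen A (m + 1) g) : E + m + 1 ≤ t := by
  by_contra! hlt
  exact not_hasZeroCombLen_append_zero hg₀
    (hasZeroCombLen_of_le ht (Nat.le_of_lt_succ hlt) (Fin.append g₀ 0))

theorem stmt15_general {n d : ℕ} (hn : 1 ≤ n) (hd : 1 ≤ d) (A : Finset ℕ) (D : ℕ)
    (hD : IsLeast {t : ℕ | ∀ g : Fin t → (Fin d → ZMod n), hasZeroComb A g} D)
    (hs : IsLeast {t : ℕ | ∀ g : Fin t → (Fin d → ZMod n),
      hasZeroCombLen A n g} (D + n - 1)) :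
    IsLeast {t : ℕ | ∀ g : Fin t → (Fin d → ZMod n),
      hasZeroCombLen A (n ^ d) g} (D + n ^ d - 1) := by
  obtain ⟨E, rfl⟩ : ∃ E, D = E + 1 := Nat.exists_eq_add_one.mpr <| Nat.pos_of_ne_zero <| by
    rintro rfl
    exact not_hasZeroComb_of_fin_zero _ (hD.1 finZeroElim)
  obtain ⟨g₀, hg₀⟩ : ∃ g₀ : Fin E → (Fin d → ZMod n), ¬hasZeroComb A g₀ := by
    by_contra! h
    exact absurd (hD.2 h) (by omega)
  have hsn : ∀ g : Fin (E + n) → (Fin d → ZMod n), hasZeroCombLen A n g := by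
    simpa [Nat.add_right_comm E 1 n] using hs.1
  have hpow : n ^ d = n ^ (d - 1) * n := by rw [← pow_succ, Nat.sub_add_cancel hd]
  have hpos : n ^ d = n ^ d - 1 + 1 := (Nat.sub_add_cancel (Nat.one_le_pow _ _ hn)).symm
  rw [Nat.add_right_comm E 1, Nat.add_sub_cancel]
  refine ⟨?_, fun t ht => ?_⟩
  · rw [hpow]
    exact hasZeroCombLen_mul hsn _
  · rw [hpos] at ht
    have := add_le_of_hasZeroCombLen hg₀ ht
    omega

theorem stmt15 {n d : ℕ} (hn : 1 ≤ n) (hd : 1 ≤ d) (A : Finset ℕ)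
    (hA : A.Nonempty) (hAsub : A ⊆ Finset.Icc 1 n) (D : ℕ)
    (hD : IsLeast {t : ℕ | ∀ g : Fin t → (Fin d → ZMod n), hasZeroComb A g} D)
    (hs : IsLeast {t : ℕ | ∀ g : Fin t → (Fin d → ZMod n),
      hasZeroCombLen A n g} (D + n - 1)) :
    IsLeast {t : ℕ | ∀ g : Fin t → (Fin d → ZMod n),
      hasZeroCombLen A (n ^ d) g} (D + n ^ d - 1) :=
  stmt15_general hn hd A D hD hs
end

section
/- Let d ≥ 1 and p ≥ 2d+1 be an odd prime. Let A_1 be the set of quadratic residues in {1,...,p-1}. Then every sequence of 2d+p elements of (Z/pZ)^d has a subsequence of length exactly p with a zero linear combination using coefficients from A_1; i.e., s_{A_1}((Z/pZ)^d) ≤ 2d+p. -/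
open MvPolynomial in
theorem stmt16 {p d : ℕ} (hp : p.Prime) (hodd : Odd p) (hd : 1 ≤ d)
    (hpd : 2 * d + 1 ≤ p) (A1 : Finset ℕ)
    (hA1 : ∀ a, a ∈ A1 ↔ a ∈ Finset.Icc 1 (p - 1) ∧ IsSquare (a : ZMod p))
    (g : Fin (2 * d + p) → (Fin d → ZMod p)) :
    hasZeroCombLen A1 p g := by
  unfold hasZeroCombLen
  haveI : Fact p.Prime := ⟨hp⟩
  have hp1 : 1 ≤ p := hp.one_lt.le
  set f : Option (Fin d) → MvPolynomial (Fin (2*d+p)) (ZMod p) :=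
    fun j => match j with
      | none => ∑ i : Fin (2*d+p), X i ^ (p - 1)
      | some j => ∑ i : Fin (2*d+p), C (g i j) * X i ^ 2 with hf
  have hdeg : (∑ j : Option (Fin d), (f j).totalDegree) < Fintype.card (Fin (2*d+p)) := by
    rw [Fintype.sum_option]
    have h1 : (f none).totalDegree ≤ p - 1 := by
      refine (totalDegree_finset_sum _ _).trans (Finset.sup_le fun i _ => ?_)
      simp [totalDegree_X_pow]
    have h2 : ∀ j : Fin d, (f (some j)).totalDegree ≤ 2 := by
      intro j
      refine (totalDegree_finset_sum _ _).trans (Finset.sup_le fun i _ => ?_)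
      refine (totalDegree_mul _ _).trans ?_
      have := totalDegree_C (σ := Fin (2*d+p)) (g i j)
      have := totalDegree_X_pow (R := ZMod p) i 2
      omega
    have h3 : (∑ j : Fin d, (f (some j)).totalDegree) ≤ 2 * d := by
      calc (∑ j : Fin d, (f (some j)).totalDegree) ≤ ∑ _j : Fin d, 2 :=
            Finset.sum_le_sum fun j _ => h2 j
        _ = 2 * d := by simp [mul_comm]
    simp only [Fintype.card_fin]
    omega
  have hdvd := char_dvd_card_solutions_of_fintype_sum_lt (K := ZMod p) p hdeg
  have h0 : ∀ j : Option (Fin d), eval (0 : Fin (2*d+p) → ZMod p) (f j) = 0 := by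
    intro j
    match j with
    | none => simp [hf, eval_sum, zero_pow (by omega : p - 1 ≠ 0)]
    | some j => simp [hf, eval_sum]
  have h1lt : 1 < Fintype.card { x : Fin (2*d+p) → ZMod p // ∀ j, eval x (f j) = 0 } := by
    rcases hdvd with ⟨c, hc⟩
    have hcpos : 0 < Fintype.card { x : Fin (2*d+p) → ZMod p // ∀ j, eval x (f j) = 0 } :=
      Fintype.card_pos_iff.mpr ⟨⟨0, h0⟩⟩
    have hc0 : c ≠ 0 := by rintro rfl; simp [hc] at hcpos
    calc 1 < p := hp.one_lt
      _ ≤ p * c := Nat.le_mul_of_pos_right _ (Nat.pos_of_ne_zero hc0)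
      _ = _ := hc.symm
  obtain ⟨⟨x, hx⟩, hxne⟩ := Fintype.exists_ne_of_one_lt_card h1lt ⟨0, h0⟩
  have hxne0 : x ≠ 0 := fun h => hxne (by simp only [h])
  set s : Finset (Fin (2*d+p)) := Finset.univ.filter (fun i => x i ≠ 0) with hs
  have hcard0 : ((s.card : ZMod p)) = 0 := by
    have := hx none
    rw [hf] at this
    simp only [eval_sum, eval_pow, eval_X] at this
    rw [← this]
    rw [← Finset.sum_subset s.subset_univ (fun i _ hi => by
      simp only [hs, Finset.mem_filter, Finset.mem_univ, true_and, not_not] at hi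
      rw [hi, zero_pow (by omega : p - 1 ≠ 0)])]
    rw [Finset.card_eq_sum_ones, Nat.cast_sum]
    exact Finset.sum_congr rfl fun i hi => by
      rw [Nat.cast_one, (ZMod.pow_card_sub_one_eq_one (Finset.mem_filter.mp hi).2).symm]
  have hdvds : p ∣ s.card := (ZMod.natCast_eq_zero_iff _ _).mp hcard0
  have hspos : 0 < s.card := by
    rcases Function.ne_iff.mp hxne0 with ⟨i, hi⟩
    exact Finset.card_pos.mpr ⟨i, Finset.mem_filter.mpr ⟨Finset.mem_univ i, by simpa using hi⟩⟩
  have hsle : s.card ≤ 2 * d + p :=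
    (Finset.card_le_card s.subset_univ).trans_eq (by simp)
  have hscard : s.card = p := by
    rcases hdvds with ⟨c, hc⟩
    have hlt : p * c < p * 2 := by omega
    have hc2 : c < 2 := Nat.lt_of_mul_lt_mul_left hlt
    have hc0 : c ≠ 0 := by rintro rfl; omega
    interval_cases c <;> omega
  refine ⟨s, hscard, fun i => (x i ^ 2).val, fun i hi => ?_, ?_⟩
  · have hxi : x i ≠ 0 := (Finset.mem_filter.mp hi).2
    have hx2 : x i ^ 2 ≠ 0 := pow_ne_zero _ hxi
    have hvlt : (x i ^ 2).val < p := ZMod.val_lt _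
    have hvne : (x i ^ 2).val ≠ 0 := fun h => hx2 (by rwa [← ZMod.val_eq_zero])
    show (x i ^ 2).val ∈ A1
    rw [hA1]
    refine ⟨Finset.mem_Icc.mpr ⟨by omega, by omega⟩, ?_⟩
    rw [ZMod.natCast_val, ZMod.cast_id]
    exact ⟨x i, by ring⟩
  · funext j
    have := hx (some j)
    rw [hf] at this
    simp only [eval_sum, eval_pow, eval_X, eval_mul, eval_C] at this
    simp only [Finset.sum_apply, Pi.smul_apply, Pi.zero_apply]
    calc ∑ i ∈ s, (x i ^ 2).val • g i j
        = ∑ i ∈ s, g i j * x i ^ 2 := Finset.sum_congr rfl fun i _ => by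
          rw [nsmul_eq_mul, ZMod.natCast_val, ZMod.cast_id]; ring
      _ = ∑ i : Fin (2*d+p), g i j * x i ^ 2 := Finset.sum_subset s.subset_univ (fun i _ hi => by
          simp only [hs, Finset.mem_filter, Finset.mem_univ, true_and, not_not] at hi
          simp [hi])
      _ = 0 := this
end

section
/- Let d ≥ 1 and p ≥ 2d+1 be an odd prime, and let A_2 be the set of quadratic non-residues in {1,...,p-1}. Then s_{A_2}((Z/pZ)^d) = 2d+p = d_{A_2}((Z/pZ)^d) + p - 1. -/
open Finset

section helpers
variable {p : ℕ} [Fact p.Prime]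

lemma sq_of_mul_nonsquares {a b : ZMod p} (ha : ¬ IsSquare a) (hb : ¬ IsSquare b) :
    IsSquare (a * b) := by
  have ha0 : a ≠ 0 := fun h => ha (h ▸ ⟨0, by ring⟩)
  have hb0 : b ≠ 0 := fun h => hb (h ▸ ⟨0, by ring⟩)
  have h1 : quadraticChar (ZMod p) a = -1 := quadraticChar_neg_one_iff_not_isSquare.mpr ha
  have h2 : quadraticChar (ZMod p) b = -1 := quadraticChar_neg_one_iff_not_isSquare.mpr hb
  have h3 : quadraticChar (ZMod p) (a * b) = 1 := by
    rw [map_mul, h1, h2]; ring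
  exact (quadraticChar_one_iff_isSquare (mul_ne_zero ha0 hb0)).mp h3

lemma mem_A2_of {A2 : Finset ℕ}
    (hA2 : ∀ a, a ∈ A2 ↔ a ∈ Finset.Icc 1 (p - 1) ∧ ¬ IsSquare (a : ZMod p))
    {x : ZMod p} (hx : ¬ IsSquare x) : x.val ∈ A2 := by
  haveI : NeZero p := ⟨(Fact.out : p.Prime).pos.ne'⟩
  have hx0 : x ≠ 0 := fun h => hx (h ▸ ⟨0, by ring⟩)
  have hcast : ((x.val : ℕ) : ZMod p) = x := ZMod.natCast_rightInverse x
  rw [hA2]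
  refine ⟨?_, by rwa [hcast]⟩
  rw [Finset.mem_Icc]
  have h1 : x.val ≠ 0 := fun h => hx0 ((ZMod.val_eq_zero x).mp h)
  have h2 : x.val < p := ZMod.val_lt x
  omega

lemma A2_props {A2 : Finset ℕ}
    (hA2 : ∀ a, a ∈ A2 ↔ a ∈ Finset.Icc 1 (p - 1) ∧ ¬ IsSquare (a : ZMod p))
    {a : ℕ} (ha : a ∈ A2) : ((a : ZMod p) ≠ 0 ∧ ¬ IsSquare (a : ZMod p)) := by
  rw [hA2, Finset.mem_Icc] at ha
  refine ⟨fun h => ?_, ha.2⟩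
  rw [ZMod.natCast_eq_zero_iff] at h
  have := (Fact.out : p.Prime).two_le
  have := Nat.le_of_dvd (by omega) h
  omega

end helpers

open Finset MvPolynomial

section cw
variable {p d k : ℕ} [Fact p.Prime]

/-- From a nonzero solution of the quadratic system, build the weighted zero-sum data. -/
lemma build_weights {A2 : Finset ℕ}
    (hA2 : ∀ a, a ∈ A2 ↔ a ∈ Finset.Icc 1 (p - 1) ∧ ¬ IsSquare (a : ZMod p))
    (η : ZMod p) (hη : ¬ IsSquare η)
    (g : Fin k → Fin d → ZMod p) (t : Fin k → ZMod p)
    (hsum : ∀ j, ∑ i, (t i)^2 * g i j = 0) :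
    ∃ a : Fin k → ℕ, (∀ i ∈ Finset.univ.filter (fun i => t i ≠ 0), a i ∈ A2) ∧
      ∑ i ∈ Finset.univ.filter (fun i => t i ≠ 0), a i • g i = 0 := by
  haveI : NeZero p := ⟨(Fact.out : p.Prime).pos.ne'⟩
  refine ⟨fun i => (η * (t i)^2).val, ?_, ?_⟩
  · intro i hi
    rw [Finset.mem_filter] at hi
    apply mem_A2_of hA2
    intro hsq
    exact hη (by
      have h2 : IsSquare ((t i)^2)⁻¹ := ⟨(t i)⁻¹, by rw [sq, mul_inv]⟩
      have ht2 : ((t i)^2) ≠ 0 := pow_ne_zero _ hi.2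
      have := hsq.mul h2
      rwa [mul_assoc, mul_inv_cancel₀ ht2, mul_one] at this)
  · funext j
    rw [Finset.sum_apply, Pi.zero_apply]
    have : ∀ i ∈ Finset.univ.filter (fun i => t i ≠ 0),
        ((η * (t i)^2).val • g i) j = η * ((t i)^2 * g i j) := by
      intro i _
      simp only [Pi.smul_apply, nsmul_eq_mul]
      rw [ZMod.natCast_rightInverse (η * (t i)^2), mul_assoc]
    rw [Finset.sum_congr rfl this, ← Finset.mul_sum]
    have hz : ∑ i ∈ Finset.univ.filter (fun i => t i ≠ 0), (t i)^2 * g i j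
        = ∑ i, (t i)^2 * g i j := by
      apply Finset.sum_filter_of_ne
      intro i _ hne ht
      exact hne (by rw [ht]; ring)
    rw [hz, hsum j, mul_zero]

lemma exists_sol_comb (hk : 2 * d < k) (g : Fin k → Fin d → ZMod p) :
    ∃ t : Fin k → ZMod p, t ≠ 0 ∧ ∀ j, ∑ i, (t i)^2 * g i j = 0 := by
  classical
  set f : Fin d → MvPolynomial (Fin k) (ZMod p) :=
    fun j => ∑ i, MvPolynomial.C (g i j) * (MvPolynomial.X i)^2 with hf
  have hdeg : (∑ j, (f j).totalDegree) < Fintype.card (Fin k) := by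
    rw [Fintype.card_fin]
    calc (∑ j : Fin d, (f j).totalDegree) ≤ ∑ j : Fin d, 2 := by
          apply Finset.sum_le_sum
          intro j _
          refine (totalDegree_finset_sum _ _).trans (Finset.sup_le fun i _ => ?_)
          refine (totalDegree_mul _ _).trans ?_
          rw [totalDegree_C, totalDegree_X_pow]
      _ = 2 * d := by simp [mul_comm]
      _ < k := hk
  have hdvd : p ∣ Fintype.card { x : Fin k → ZMod p // ∀ j, eval x (f j) = 0 } := by
    have h := char_dvd_card_solutions_of_fintype_sum_lt p hdeg
    convert h using 2
  have hzero : (fun _ : Fin k => (0 : ZMod p)) ∈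
      {x : Fin k → ZMod p | ∀ j, eval x (f j) = 0} := by
    intro j; simp [hf]
  have hpos : 0 < Fintype.card { x : Fin k → ZMod p // ∀ j, eval x (f j) = 0 } :=
    Fintype.card_pos_iff.mpr ⟨⟨_, hzero⟩⟩
  have h2 : 1 < Fintype.card { x : Fin k → ZMod p // ∀ j, eval x (f j) = 0 } := by
    have := (Fact.out : p.Prime).two_le
    have := Nat.le_of_dvd hpos hdvd
    omega
  obtain ⟨y, hy⟩ := Fintype.exists_ne_of_one_lt_card h2 ⟨_, hzero⟩
  refine ⟨y.1, fun h0 => hy (Subtype.ext h0), fun j => ?_⟩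
  have := y.2 j
  simp only [hf, eval_sum, eval_mul, eval_C, eval_pow, eval_X] at this
  rw [show (∑ i, (y.1 i)^2 * g i j) = ∑ i, g i j * (y.1 i)^2 from
    Finset.sum_congr rfl fun i _ => mul_comm _ _]
  exact this

end cw

open Finset

/-- The extremal sequence for the lower bounds. -/
def gLB (d : ℕ) {p : ℕ} (η : ZMod p) (k : ℕ) : Fin k → Fin d → ZMod p :=
  fun i j => if (i : ℕ) = (j : ℕ) then 1 else if (i : ℕ) = (j : ℕ) + d then -η else 0

lemma sum_subsingleton {α β : Type*} [AddCommMonoid β] (T : Finset α)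
    (h : ∀ x ∈ T, ∀ x' ∈ T, x = x') (f : α → β) :
    (T = ∅ ∧ ∑ x ∈ T, f x = 0) ∨ (∃ x, x ∈ T ∧ ∑ y ∈ T, f y = f x) := by
  rcases T.eq_empty_or_nonempty with hT | ⟨x, hx⟩
  · left; simp [hT]
  · right
    refine ⟨x, hx, ?_⟩
    have hTx : T = {x} := by
      ext y
      simp only [Finset.mem_singleton]
      exact ⟨fun hy => h y hy x hx, fun hy => hy ▸ hx⟩
    rw [hTx, Finset.sum_singleton]

section lower
variable {p d k : ℕ} [Fact p.Prime]

lemma lower_core (hd : 1 ≤ d) {A2 : Finset ℕ}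
    (hA2 : ∀ a, a ∈ A2 ↔ a ∈ Finset.Icc 1 (p - 1) ∧ ¬ IsSquare (a : ZMod p))
    (η : ZMod p) (hη : ¬ IsSquare η)
    (s : Finset (Fin k)) (a : Fin k → ℕ) (haA : ∀ i ∈ s, a i ∈ A2)
    (hsum : ∑ i ∈ s, a i • gLB d η k i = 0)
    (i₀ : Fin k) (hi₀ : i₀ ∈ s) (hlt : (i₀ : ℕ) < 2 * d) : False := by
  have hη0 : η ≠ 0 := fun h => hη (h ▸ ⟨0, by ring⟩)
  obtain ⟨j₀, hj⟩ : ∃ j₀ : Fin d, (i₀ : ℕ) = (j₀ : ℕ) ∨ (i₀ : ℕ) = (j₀ : ℕ) + d := by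
    rcases Nat.lt_or_ge (i₀ : ℕ) d with h | h
    · exact ⟨⟨i₀, h⟩, Or.inl rfl⟩
    · exact ⟨⟨(i₀ : ℕ) - d, by omega⟩, Or.inr (by simp; omega)⟩
  have h0 := congrFun hsum j₀
  rw [Finset.sum_apply] at h0
  simp only [Pi.smul_apply, nsmul_eq_mul, Pi.zero_apply] at h0
  have hsplit : ∀ i ∈ s, (a i : ZMod p) * gLB d η k i j₀
      = (if (i : ℕ) = (j₀ : ℕ) then (a i : ZMod p) else 0)
        + (if (i : ℕ) = (j₀ : ℕ) + d then (a i : ZMod p) * (-η) else 0) := by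
    intro i _
    have hd0 : ¬ (d = 0) := by omega
    by_cases h1 : (i : ℕ) = (j₀ : ℕ)
    · have h2 : ¬((i : ℕ) = (j₀ : ℕ) + d) := by omega
      simp [gLB, h1, h2, hd0]
    · by_cases h2 : (i : ℕ) = (j₀ : ℕ) + d <;> simp [gLB, h1, h2, hd0]
  rw [Finset.sum_congr rfl hsplit, Finset.sum_add_distrib,
    ← Finset.sum_filter, ← Finset.sum_filter] at h0
  set T1 := s.filter (fun i : Fin k => (i : ℕ) = (j₀ : ℕ)) with hT1def
  set T2 := s.filter (fun i : Fin k => (i : ℕ) = (j₀ : ℕ) + d) with hT2def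
  have hT1sub : ∀ x ∈ T1, ∀ x' ∈ T1, x = x' := by
    intro x hx x' hx'
    exact Fin.ext (by rw [(Finset.mem_filter.mp hx).2, (Finset.mem_filter.mp hx').2])
  have hT2sub : ∀ x ∈ T2, ∀ x' ∈ T2, x = x' := by
    intro x hx x' hx'
    exact Fin.ext (by rw [(Finset.mem_filter.mp hx).2, (Finset.mem_filter.mp hx').2])
  have hmem : i₀ ∈ T1 ∨ i₀ ∈ T2 := by
    rcases hj with hj | hj
    · exact Or.inl (Finset.mem_filter.mpr ⟨hi₀, hj⟩)
    · exact Or.inr (Finset.mem_filter.mpr ⟨hi₀, hj⟩)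
  have hcast : ∀ i ∈ s, ((a i : ℕ) : ZMod p) ≠ 0 ∧ ¬ IsSquare ((a i : ℕ) : ZMod p) :=
    fun i hi => A2_props hA2 (haA i hi)
  rcases sum_subsingleton T1 hT1sub (fun i => ((a i : ℕ) : ZMod p)) with ⟨hT1e, hS1⟩ | ⟨x, hx, hS1⟩ <;>
    rcases sum_subsingleton T2 hT2sub (fun i => ((a i : ℕ) : ZMod p) * (-η)) with ⟨hT2e, hS2⟩ | ⟨y, hy, hS2⟩
  · rcases hmem with hm | hm
    · rw [hT1e] at hm; exact absurd hm (Finset.notMem_empty _)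
    · rw [hT2e] at hm; exact absurd hm (Finset.notMem_empty _)
  · -- T1 empty, T2 = {y} : a y * (-η) = 0
    rw [hS1, hS2, zero_add] at h0
    have hy' := hcast y (Finset.mem_filter.mp hy).1
    rcases mul_eq_zero.mp h0 with h | h
    · exact hy'.1 h
    · exact hη0 (neg_eq_zero.mp h)
  · -- T1 = {x}, T2 empty : a x = 0
    rw [hS1, hS2, add_zero] at h0
    exact (hcast x (Finset.mem_filter.mp hx).1).1 h0
  · -- both : a x + a y * (-η) = 0
    rw [hS1, hS2] at h0
    have hx' := hcast x (Finset.mem_filter.mp hx).1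
    have hy' := hcast y (Finset.mem_filter.mp hy).1
    have heq : ((a x : ℕ) : ZMod p) = ((a y : ℕ) : ZMod p) * η := by linear_combination h0
    exact hx'.2 (heq ▸ sq_of_mul_nonsquares hy'.2 hη)

end lower

open Finset MvPolynomial

section cw2
variable {p d k : ℕ} [Fact p.Prime]

lemma exists_sol_len (hk1 : 2 * d + (p - 1) < k) (hk2 : k < 2 * p)
    (g : Fin k → Fin d → ZMod p) :
    ∃ t : Fin k → ZMod p, (Finset.univ.filter (fun i => t i ≠ 0)).card = p ∧
      ∀ j, ∑ i, (t i)^2 * g i j = 0 := by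
  classical
  have hp2 : 2 ≤ p := (Fact.out : p.Prime).two_le
  set f : Option (Fin d) → MvPolynomial (Fin k) (ZMod p) :=
    fun o => Option.rec (∑ i, (MvPolynomial.X i)^(p-1))
      (fun j => ∑ i, MvPolynomial.C (g i j) * (MvPolynomial.X i)^2) o with hf
  have hdeg : (∑ o : Option (Fin d), (f o).totalDegree) < Fintype.card (Fin k) := by
    rw [Fintype.card_fin, Fintype.sum_option]
    have h0 : (f none).totalDegree ≤ p - 1 := by
      refine (totalDegree_finset_sum _ _).trans (Finset.sup_le fun i _ => ?_)
      rw [totalDegree_X_pow]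
    have hs : ∀ j : Fin d, (f (some j)).totalDegree ≤ 2 := by
      intro j
      refine (totalDegree_finset_sum _ _).trans (Finset.sup_le fun i _ => ?_)
      refine (totalDegree_mul _ _).trans ?_
      rw [totalDegree_C, totalDegree_X_pow]
    calc (f none).totalDegree + ∑ j : Fin d, (f (some j)).totalDegree
        ≤ (p - 1) + ∑ j : Fin d, 2 := add_le_add h0 (Finset.sum_le_sum fun j _ => hs j)
      _ = 2 * d + (p - 1) := by simp [mul_comm]; omega
      _ < k := hk1
  have hdvd : p ∣ Fintype.card { x : Fin k → ZMod p // ∀ o, eval x (f o) = 0 } := by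
    have h := char_dvd_card_solutions_of_fintype_sum_lt p hdeg
    convert h using 2
  have hzero : (fun _ : Fin k => (0 : ZMod p)) ∈
      {x : Fin k → ZMod p | ∀ o, eval x (f o) = 0} := by
    intro o
    cases o <;> simp [hf, zero_pow, Nat.sub_ne_zero_of_lt (by omega : 1 < p)]
  have hpos : 0 < Fintype.card { x : Fin k → ZMod p // ∀ o, eval x (f o) = 0 } :=
    Fintype.card_pos_iff.mpr ⟨⟨_, hzero⟩⟩
  have h2 : 1 < Fintype.card { x : Fin k → ZMod p // ∀ o, eval x (f o) = 0 } := by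
    have := Nat.le_of_dvd hpos hdvd
    omega
  obtain ⟨y, hy⟩ := Fintype.exists_ne_of_one_lt_card h2 ⟨_, hzero⟩
  have hyne : y.1 ≠ (fun _ => 0) := fun h0 => hy (Subtype.ext h0)
  -- the support
  set c := (Finset.univ.filter (fun i => y.1 i ≠ 0)).card with hc
  have hcsum : ((c : ℕ) : ZMod p) = 0 := by
    have h := y.2 none
    simp only [hf, eval_sum, eval_pow, eval_X] at h
    have e : ∑ i, (y.1 i)^(p-1) = ((c : ℕ) : ZMod p) := by
      rw [hc, Finset.card_filter]
      push_cast
      apply Finset.sum_congr rfl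
      intro i _
      by_cases hi : y.1 i = 0
      · simp [hi, zero_pow, Nat.sub_ne_zero_of_lt (by omega : 1 < p)]
      · simp [hi, ZMod.pow_card_sub_one_eq_one hi]
    rw [← e]
    exact h
  have hdvdc : p ∣ c := (ZMod.natCast_eq_zero_iff c p).mp hcsum
  have hcpos : 0 < c := by
    rw [hc, Finset.card_pos]
    obtain ⟨i, hi⟩ := Function.ne_iff.mp hyne
    exact ⟨i, by simp [hi]⟩
  have hcle : c ≤ k := le_trans (Finset.card_filter_le _ _) (by simp)
  have hcp : c = p := by
    obtain ⟨m, hm⟩ := hdvdc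
    rcases m with _ | _ | m
    · omega
    · omega
    · exfalso
      have : 2 * p ≤ p * (m + 1 + 1) := by
        calc 2 * p = p * 2 := by ring
          _ ≤ p * (m + 1 + 1) := Nat.mul_le_mul_left _ (by omega)
      omega
  refine ⟨y.1, hcp, fun j => ?_⟩
  have h := y.2 (some j)
  simp only [hf, eval_sum, eval_mul, eval_C, eval_pow, eval_X] at h
  rw [show (∑ i, (y.1 i)^2 * g i j) = ∑ i, g i j * (y.1 i)^2 from
    Finset.sum_congr rfl fun i _ => mul_comm _ _]
  exact h

end cw2

theorem stmt17 {p d : ℕ} (hp : p.Prime) (hodd : Odd p) (hd : 1 ≤ d)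
    (hpd : 2 * d + 1 ≤ p) (A2 : Finset ℕ)
    (hA2 : ∀ a, a ∈ A2 ↔ a ∈ Finset.Icc 1 (p - 1) ∧ ¬ IsSquare (a : ZMod p)) :
    IsLeast {t : ℕ | ∀ g : Fin t → (Fin d → ZMod p),
      hasZeroCombLen A2 p g} (2 * d + p) ∧
    IsLeast {t : ℕ | ∀ g : Fin t → (Fin d → ZMod p),
      hasZeroComb A2 g} (2 * d + 1) := by
  haveI : Fact p.Prime := ⟨hp⟩
  have hp2 : p ≠ 2 := by rcases hodd with ⟨m, hm⟩; omega
  obtain ⟨η, hη⟩ := FiniteField.exists_nonsquare (F := ZMod p)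
    (by rw [ZMod.ringChar_zmod_n]; exact hp2)
  constructor
  · constructor
    · -- membership: every sequence of length 2d+p has a zero comb of length p
      intro g
      obtain ⟨t, hcard, hsol⟩ := exists_sol_len
        (by omega : 2 * d + (p - 1) < 2 * d + p) (by omega : 2 * d + p < 2 * p) g
      obtain ⟨a, haA, hsum⟩ := build_weights hA2 η hη g t hsol
      exact ⟨_, hcard, a, haA, hsum⟩
    · -- lower bound
      intro t ht
      by_contra hc
      push_neg at hc
      obtain ⟨s, hcard, a, haA, hsum⟩ := ht (gLB d η t)
      have hex : ∃ i₀ ∈ s, (i₀ : ℕ) < 2 * d := by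
        by_contra h
        push_neg at h
        have hle : s.card ≤ (Finset.Ico (2 * d) t).card :=
          Finset.card_le_card_of_injOn (fun i => (i : ℕ))
            (fun i hi => Finset.mem_Ico.mpr ⟨h i hi, i.isLt⟩)
            (fun i _ i' _ hii => Fin.ext hii)
        rw [Nat.card_Ico] at hle
        omega
      obtain ⟨i₀, hi₀, hlt⟩ := hex
      exact lower_core hd hA2 η hη s a haA hsum i₀ hi₀ hlt
  · constructor
    · intro g
      obtain ⟨t, htne, hsol⟩ := exists_sol_comb (by omega : 2 * d < 2 * d + 1) g
      obtain ⟨a, haA, hsum⟩ := build_weights hA2 η hη g t hsol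
      obtain ⟨i, hi⟩ := Function.ne_iff.mp htne
      exact ⟨_, ⟨i, by simp only [Finset.mem_filter, Finset.mem_univ, true_and]; simpa using hi⟩, a, haA, hsum⟩
    · intro t ht
      by_contra hc
      push_neg at hc
      obtain ⟨s, ⟨i₀, hi₀⟩, a, haA, hsum⟩ := ht (gLB d η t)
      exact lower_core hd hA2 η hη s a haA hsum i₀ hi₀ (by have := i₀.isLt; omega)
end
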